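/- arXiv:2401.04048 — 7 statements merged into one kernel-verified Lean document; each statement's English description precedes it below -/
import Mathlib

section
/- For every circle-diffeomorphism lift f, one has (1/(2π)) ∫₀^{2π} ( −f'(x)² + (f''(x)/f'(x))² ) dx ≥ −1; equivalently, the renormalized energy with constant mass-aspect function μ ≡ −1 satisfies H[−1; f] ≥ −1. -/
open Real

/-- A lift of an orientation-preserving diffeomorphism of the circle: a smooth
function `f : ℝ → ℝ` with everywhere positive derivative satisfying
`f (x + 2π) = f x + 2π`. -/
def IsCircleDiffeoLift (f : ℝ → ℝ) : Prop :=
  ContDiff ℝ (⊤ : ℕ∞) f ∧ (∀ x, 0 < deriv f x) ∧ ∀ x, f (x + 2 * π) = f x + 2 * π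

/-- The renormalized energy `H[μ; f]` of a circle-diffeomorphism lift `f`
with mass-aspect function `μ`. -/
noncomputable def renormEnergy (μ : ℝ → ℝ) (f : ℝ → ℝ) : ℝ :=
  (1 / (2 * π)) * ∫ x in (0:ℝ)..(2 * π),
    (μ (f x) * (deriv f x) ^ 2 + (deriv (deriv f) x / deriv f x) ^ 2)

open MeasureTheory intervalIntegral Filter Topology Set

namespace SchwartzAux

/-- The Wirtinger-type integrand with phase shift `a`. -/
noncomputable def Ig (f : ℝ → ℝ) (a x : ℝ) : ℝ :=
  (deriv (deriv f) x / (2 * deriv f x) * sin ((x - a) / 2) + cos ((x - a) / 2) / 2) ^ 2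
    - (deriv f x) ^ 2 * sin ((x - a) / 2) ^ 2 / 4

/-- The boundary function for the completion of the square. -/
noncomputable def Psi (f : ℝ → ℝ) (a x : ℝ) : ℝ :=
  deriv f x * sin ((x - a) / 2) ^ 2 * cos ((f x - f a) / 2) / (2 * sin ((f x - f a) / 2))

/-- The derivative of `Psi`. -/
noncomputable def psid (f : ℝ → ℝ) (a x : ℝ) : ℝ :=
  (-(deriv f x) / (4 * sin ((f x - f a) / 2) ^ 2)) * (deriv f x * sin ((x - a) / 2) ^ 2)
  + (cos ((f x - f a) / 2) / (2 * sin ((f x - f a) / 2))) *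
      (deriv (deriv f) x * sin ((x - a) / 2) ^ 2
        + deriv f x * sin ((x - a) / 2) * cos ((x - a) / 2))

variable {f : ℝ → ℝ}

lemma smooth_deriv (hf : IsCircleDiffeoLift f) : ContDiff ℝ (⊤ : ℕ∞) (deriv f) :=
  (contDiff_infty_iff_deriv.mp (hf.1.of_le (by simp))).2

lemma cont_p (hf : IsCircleDiffeoLift f) : Continuous (deriv f) :=
  hf.1.continuous_deriv (by simp)

lemma cont_q (hf : IsCircleDiffeoLift f) : Continuous (deriv (deriv f)) :=
  (smooth_deriv hf).continuous_deriv (by exact_mod_cast le_top)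

lemma hasDerivAt_f (hf : IsCircleDiffeoLift f) (x : ℝ) : HasDerivAt f (deriv f x) x :=
  (hf.1.differentiable (by simp) x).hasDerivAt

lemma hasDerivAt_p (hf : IsCircleDiffeoLift f) (x : ℝ) :
    HasDerivAt (deriv f) (deriv (deriv f) x) x :=
  ((smooth_deriv hf).differentiable (by simp) x).hasDerivAt

lemma periodic_p (hf : IsCircleDiffeoLift f) : Function.Periodic (deriv f) (2 * π) := by
  intro x
  have h1 : deriv (fun y => f (y + 2 * π)) x = deriv f (x + 2 * π) :=
    deriv_comp_add_const f _ x
  have h2 : (fun y => f (y + 2 * π)) = fun y => f y + 2 * π := funext hf.2.2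
  rw [h2] at h1
  rw [← h1, deriv_add_const]

lemma periodic_q (hf : IsCircleDiffeoLift f) :
    Function.Periodic (deriv (deriv f)) (2 * π) := by
  intro x
  have h1 : deriv (fun y => deriv f (y + 2 * π)) x = deriv (deriv f) (x + 2 * π) :=
    deriv_comp_add_const (deriv f) _ x
  have h2 : (fun y => deriv f (y + 2 * π)) = deriv f := funext (periodic_p hf)
  rw [h2] at h1
  rw [← h1]

lemma cont_Ig (hf : IsCircleDiffeoLift f) (a : ℝ) : Continuous (Ig f a) := by
  have hp := cont_p hf
  have hq := cont_q hf
  have hs : Continuous fun x : ℝ => sin ((x - a) / 2) := by fun_prop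
  have hc : Continuous fun x : ℝ => cos ((x - a) / 2) := by fun_prop
  have hdiv : Continuous fun x => deriv (deriv f) x / (2 * deriv f x) :=
    hq.div (continuous_const.mul hp) (fun x => ne_of_gt (by linarith [hf.2.1 x]))
  exact (((hdiv.mul hs).add (hc.div_const 2)).pow 2).sub
    (((hp.pow 2).mul (hs.pow 2)).div_const 4)

/-- `Ig f a` is `2π`-periodic. -/
lemma periodic_Ig (hf : IsCircleDiffeoLift f) (a : ℝ) :
    Function.Periodic (Ig f a) (2 * π) := by
  intro x
  have hs : sin ((x + 2 * π - a) / 2) = -sin ((x - a) / 2) := by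
    have : (x + 2 * π - a) / 2 = (x - a) / 2 + π := by ring
    rw [this, Real.sin_add_pi]
  have hc : cos ((x + 2 * π - a) / 2) = -cos ((x - a) / 2) := by
    have : (x + 2 * π - a) / 2 = (x - a) / 2 + π := by ring
    rw [this, Real.cos_add_pi]
  unfold Ig
  rw [periodic_p hf x, periodic_q hf x, hs, hc]
  ring

/-- Monotonicity comparison: on `[a,b]`, `f` grows at least at rate `m`. -/
lemma f_growth (hf : IsCircleDiffeoLift f) {a b m : ℝ}
    (hm : ∀ y ∈ Icc a b, m ≤ deriv f y) :
    MonotoneOn (fun y => f y - m * y) (Icc a b) := by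
  apply monotoneOn_of_deriv_nonneg (convex_Icc a b)
  · exact ((hf.1.continuous.sub (continuous_const.mul continuous_id)).continuousOn)
  · intro y _
    exact (((hasDerivAt_f hf y).sub ((hasDerivAt_id y).const_mul m)).differentiableAt).differentiableWithinAt
  · intro y hy
    rw [interior_Icc] at hy
    have : deriv (fun y => f y - m * y) y = deriv f y - m := by
      have := ((hasDerivAt_f hf y).sub ((hasDerivAt_id y).const_mul m)).deriv
      simp only [mul_one] at this
      exact this
    rw [this]
    have := hm y (Ioo_subset_Icc_self hy)
    linarith

/-- `Psi` has derivative `psid` inside the interval. -/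
lemma hasDerivAt_Psi (hf : IsCircleDiffeoLift f) {a x : ℝ}
    (hsin : sin ((f x - f a) / 2) ≠ 0) :
    HasDerivAt (Psi f a) (psid f a x) x := by
  have hp := hf.2.1 x
  -- derivative of θ := (f x - f a)/2
  have hθ : HasDerivAt (fun y => (f y - f a) / 2) (deriv f x / 2) x :=
    ((hasDerivAt_f hf x).sub_const _).div_const 2
  have hsθ : HasDerivAt (fun y => sin ((f y - f a) / 2))
      (cos ((f x - f a) / 2) * (deriv f x / 2)) x := hθ.sin
  have hcθ : HasDerivAt (fun y => cos ((f y - f a) / 2))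
      (-sin ((f x - f a) / 2) * (deriv f x / 2)) x := hθ.cos
  have hs : HasDerivAt (fun y => sin ((y - a) / 2)) (cos ((x - a) / 2) * (1 / 2)) x := by
    have : HasDerivAt (fun y : ℝ => (y - a) / 2) (1 / 2) x := by
      simpa using ((hasDerivAt_id x).sub_const a).div_const 2
    exact this.sin
  have hs2 : HasDerivAt (fun y => sin ((y - a) / 2) ^ 2)
      (2 * sin ((x - a) / 2) ^ 1 * (cos ((x - a) / 2) * (1 / 2))) x := by
    simpa [Pi.pow_def] using hs.pow 2
  have hW : HasDerivAt (fun y => deriv f y * sin ((y - a) / 2) ^ 2)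
      (deriv (deriv f) x * sin ((x - a) / 2) ^ 2
        + deriv f x * (2 * sin ((x - a) / 2) ^ 1 * (cos ((x - a) / 2) * (1 / 2)))) x :=
    (hasDerivAt_p hf x).mul hs2
  have hN : HasDerivAt
      (fun y => deriv f y * sin ((y - a) / 2) ^ 2 * cos ((f y - f a) / 2))
      ((deriv (deriv f) x * sin ((x - a) / 2) ^ 2
        + deriv f x * (2 * sin ((x - a) / 2) ^ 1 * (cos ((x - a) / 2) * (1 / 2))))
          * cos ((f x - f a) / 2)
        + deriv f x * sin ((x - a) / 2) ^ 2 * (-sin ((f x - f a) / 2) * (deriv f x / 2))) x :=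
    hW.mul hcθ
  have hD : HasDerivAt (fun y => 2 * sin ((f y - f a) / 2))
      (2 * (cos ((f x - f a) / 2) * (deriv f x / 2))) x := hsθ.const_mul 2
  have hD0 : (2:ℝ) * sin ((f x - f a) / 2) ≠ 0 := by
    simpa using hsin
  have hder := hN.div hD hD0
  have hpy := sin_sq_add_cos_sq ((f x - f a) / 2)
  have heq : psid f a x = (((deriv (deriv f) x * sin ((x - a) / 2) ^ 2
        + deriv f x * (2 * sin ((x - a) / 2) ^ 1 * (cos ((x - a) / 2) * (1 / 2))))
          * cos ((f x - f a) / 2)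
        + deriv f x * sin ((x - a) / 2) ^ 2 * (-sin ((f x - f a) / 2) * (deriv f x / 2)))
          * (2 * sin ((f x - f a) / 2))
        - deriv f x * sin ((x - a) / 2) ^ 2 * cos ((f x - f a) / 2)
          * (2 * (cos ((f x - f a) / 2) * (deriv f x / 2))))
        / (2 * sin ((f x - f a) / 2)) ^ 2 := by
    unfold psid
    field_simp
    linear_combination (4 * sin ((x - a) / 2) ^ 2 * deriv f x ^ 2) * hpy
  rw [heq]
  exact hder

/-- The completed square: `psid ≤ Ig` pointwise. -/
lemma psid_le_Ig (hf : IsCircleDiffeoLift f) {a x : ℝ}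
    (hsin : sin ((f x - f a) / 2) ≠ 0) : psid f a x ≤ Ig f a x := by
  have hp := hf.2.1 x
  have hpy := sin_sq_add_cos_sq ((f x - f a) / 2)
  have key : Ig f a x - psid f a x
      = (deriv (deriv f) x / (2 * deriv f x) * sin ((x - a) / 2) + cos ((x - a) / 2) / 2
          - cos ((f x - f a) / 2) / (2 * sin ((f x - f a) / 2))
            * deriv f x * sin ((x - a) / 2)) ^ 2 := by
    unfold Ig psid
    field_simp
    linear_combination (-4 * sin ((x - a) / 2) ^ 2 * deriv f x ^ 4) * hpy
  nlinarith [key, sq_nonneg (deriv (deriv f) x / (2 * deriv f x) * sin ((x - a) / 2)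
    + cos ((x - a) / 2) / 2
    - cos ((f x - f a) / 2) / (2 * sin ((f x - f a) / 2)) * deriv f x * sin ((x - a) / 2))]


lemma cont_sin_theta (hf : IsCircleDiffeoLift f) (a : ℝ) :
    Continuous fun x => sin ((f x - f a) / 2) :=
  Real.continuous_sin.comp ((hf.1.continuous.sub continuous_const).div_const 2)

lemma cont_cos_theta (hf : IsCircleDiffeoLift f) (a : ℝ) :
    Continuous fun x => cos ((f x - f a) / 2) :=
  Real.continuous_cos.comp ((hf.1.continuous.sub continuous_const).div_const 2)

lemma contOn_psid (hf : IsCircleDiffeoLift f) {a : ℝ} {S : Set ℝ}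
    (hS : ∀ x ∈ S, sin ((f x - f a) / 2) ≠ 0) : ContinuousOn (psid f a) S := by
  have hp := cont_p hf
  have hq := cont_q hf
  have hst := cont_sin_theta hf a
  have hct := cont_cos_theta hf a
  have hs : Continuous fun x : ℝ => sin ((x - a) / 2) := by fun_prop
  have hc : Continuous fun x : ℝ => cos ((x - a) / 2) := by fun_prop
  unfold psid
  apply ContinuousOn.add
  · apply ContinuousOn.mul _ ((hp.mul (hs.pow 2)).continuousOn)
    apply ContinuousOn.div (hp.neg.continuousOn) ((continuous_const.mul (hst.pow 2)).continuousOn)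
    intro x hx
    have := hS x hx
    simpa using this
  · apply ContinuousOn.mul
    · apply ContinuousOn.div (hct.continuousOn) ((continuous_const.mul hst).continuousOn)
      intro x hx
      have := hS x hx
      simpa using this
    · exact ((hq.mul (hs.pow 2)).add ((hp.mul hs).mul hc)).continuousOn

set_option maxHeartbeats 1000000 in
/-- The core inequality: the Wirtinger-type integral with phase `a` is nonnegative. -/
lemma core (hf : IsCircleDiffeoLift f) (a : ℝ) :
    0 ≤ ∫ x in a..(a + 2 * π), Ig f a x := by
  have hπ := Real.pi_pos
  set b := a + 2 * π with hb
  have hab : a < b := by simp only [hb]; linarith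
  have hsm : StrictMono f := strictMono_of_deriv_pos hf.2.1
  have hfb : f b = f a + 2 * π := hf.2.2 a
  obtain ⟨x₀, hx₀, hmin⟩ :=
    isCompact_Icc.exists_isMinOn (nonempty_Icc.mpr hab.le) ((cont_p hf).continuousOn)
  obtain ⟨x₁, hx₁, hmax⟩ :=
    isCompact_Icc.exists_isMaxOn (nonempty_Icc.mpr hab.le) ((cont_p hf).continuousOn)
  set m := deriv f x₀ with hmdef
  set M := deriv f x₁ with hMdef
  have hm0 : 0 < m := hf.2.1 x₀
  have hM0 : 0 < M := hf.2.1 x₁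
  have hmle : ∀ y ∈ Icc a b, m ≤ deriv f y := fun y hy => hmin hy
  have hMge : ∀ y ∈ Icc a b, deriv f y ≤ M := fun y hy => hmax hy
  have hmono := f_growth hf hmle
  clear_value b m M
  clear hmin hmax hmdef hMdef
  have hgrow1 : ∀ x ∈ Icc a b, m * (x - a) ≤ f x - f a := by
    intro x hx
    have := hmono (left_mem_Icc.mpr hab.le) hx hx.1
    simp only at this
    nlinarith
  have hgrow2 : ∀ x ∈ Icc a b, m * (b - x) ≤ f b - f x := by
    intro x hx
    have := hmono hx (right_mem_Icc.mpr hab.le) hx.2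
    simp only at this
    nlinarith
  have hθpos : ∀ x ∈ Ioo a b, 0 < (f x - f a) / 2 := by
    intro x hx
    have := hsm hx.1
    linarith
  have hθlt : ∀ x ∈ Ioo a b, (f x - f a) / 2 < π := by
    intro x hx
    have := hsm hx.2
    rw [hfb] at this
    linarith
  have hsinpos : ∀ x ∈ Ioo a b, 0 < sin ((f x - f a) / 2) := fun x hx =>
    Real.sin_pos_of_pos_of_lt_pi (hθpos x hx) (hθlt x hx)
  -- the primitive of Ig
  set F : ℝ → ℝ := fun t => ∫ x in a..t, Ig f a x with hF
  have hFc : Continuous F :=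
    intervalIntegral.continuous_primitive
      (fun u v => ((cont_Ig hf a).intervalIntegrable u v)) a
  have hFa : F a = 0 := by simp only [hF]; exact intervalIntegral.integral_same
  have hFdiff : ∀ u t : ℝ, F t - F u = ∫ x in u..t, Ig f a x := by
    intro u t
    simp only [hF]
    exact intervalIntegral.integral_interval_sub_left
      ((cont_Ig hf a).intervalIntegrable a t) ((cont_Ig hf a).intervalIntegrable a u)
  have hgoal : (∫ x in a..b, Ig f a x) = F b := by simp only [hF]
  clear_value F
  rw [hgoal]
  -- main comparison on interior subintervals
  have key : ∀ u ∈ Ioo a b, ∀ t ∈ Ioo a b, u ≤ t →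
      Psi f a t - Psi f a u ≤ F t - F u := by
    intro u hu t ht hut
    have hsub : Icc u t ⊆ Ioo a b := fun y hy =>
      ⟨lt_of_lt_of_le hu.1 hy.1, lt_of_le_of_lt hy.2 ht.2⟩
    have hsub' : uIcc u t ⊆ Ioo a b := by rwa [uIcc_of_le hut]
    have hint_psid : IntervalIntegrable (psid f a) volume u t :=
      (contOn_psid hf (fun x hx => (hsinpos x (hsub' hx)).ne')).intervalIntegrable
    have hftc : ∫ x in u..t, psid f a x = Psi f a t - Psi f a u := by
      apply intervalIntegral.integral_eq_sub_of_hasDerivAt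
      · intro x hx
        exact hasDerivAt_Psi hf (hsinpos x (hsub' hx)).ne'
      · exact hint_psid
    have hint_Ig : IntervalIntegrable (Ig f a) volume u t :=
      (cont_Ig hf a).intervalIntegrable u t
    have hmono_int : ∫ x in u..t, psid f a x ≤ ∫ x in u..t, Ig f a x := by
      apply intervalIntegral.integral_mono_on hut hint_psid hint_Ig
      intro x hx
      exact psid_le_Ig hf (hsinpos x (hsub hx)).ne'
    have := hFdiff u t
    linarith [hftc, hmono_int]
  -- limit of Psi at the left endpoint
  have T1 : Tendsto (Psi f a) (𝓝[>] a) (𝓝 0) := by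
    have hev : ∀ᶠ x in 𝓝[>] a, |Psi f a x| ≤ M / (2 * m) * (x - a) := by
      have h1 : Ioo a b ∈ 𝓝[>] a := Ioo_mem_nhdsGT_of_mem ⟨le_refl a, hab⟩
      have h2 : ∀ᶠ x in 𝓝[>] a, (f x - f a) / 2 < 1 := by
        have hco : Tendsto (fun x => (f x - f a) / 2) (𝓝[>] a) (𝓝 ((f a - f a) / 2)) :=
          (((hf.1.continuous.tendsto a).mono_left nhdsWithin_le_nhds).sub
            tendsto_const_nhds).div_const 2
        simp only [sub_self, zero_div] at hco
        exact hco.eventually_lt_const one_pos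
      filter_upwards [h1, h2] with x hx hθ1
      have hxa : 0 < x - a := sub_pos.mpr hx.1
      have hθp : 0 < (f x - f a) / 2 := hθpos x hx
      have hsp : 0 < sin ((f x - f a) / 2) := hsinpos x hx
      have hθlb : m * (x - a) / 2 ≤ (f x - f a) / 2 := by
        have := hgrow1 x (Ioo_subset_Icc_self hx)
        linarith
      have hsin_lb : m * (x - a) / 4 ≤ sin ((f x - f a) / 2) := by
        have hcube := Real.sin_gt_sub_cube hθp
        have h3 : ((f x - f a) / 2) ^ 3 ≤ (f x - f a) / 2 := by
          nlinarith [mul_nonneg (mul_nonneg hθp.le hθp.le) (sub_nonneg.mpr hθ1.le),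
            mul_nonneg hθp.le (sub_nonneg.mpr hθ1.le)]
        nlinarith [hcube, hθlb, h3, mul_pos hm0 hxa]
      have hslb : (0:ℝ) < 2 * sin ((f x - f a) / 2) := by linarith
      have hsx2 : sin ((x - a) / 2) ^ 2 ≤ ((x - a) / 2) ^ 2 := by
        have h := Real.sin_le (by linarith : (0:ℝ) ≤ (x - a) / 2)
        have h0 : 0 ≤ sin ((x - a) / 2) := by
          apply Real.sin_nonneg_of_nonneg_of_le_pi
          · linarith
          · simp only [hb] at hx; nlinarith [hx.2]
        nlinarith
      have hpM : deriv f x ≤ M := hMge x (Ioo_subset_Icc_self hx)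
      have hpx : 0 < deriv f x := hf.2.1 x
      have habs : |Psi f a x| =
          deriv f x * sin ((x - a) / 2) ^ 2 * |cos ((f x - f a) / 2)| /
            (2 * sin ((f x - f a) / 2)) := by
        unfold Psi
        rw [abs_div, abs_mul, abs_mul, abs_of_pos hpx, abs_of_nonneg (sq_nonneg _),
          abs_of_pos hslb]
      rw [habs, div_le_iff₀ hslb]
      have hcos1 : |cos ((f x - f a) / 2)| ≤ 1 := Real.abs_cos_le_one _
      have hidentity : M / (2 * m) * (x - a) * (2 * (m * (x - a) / 4))
          = M * ((x - a) / 2) ^ 2 := by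
        field_simp
        ring
      nlinarith [mul_le_mul (mul_le_mul hpM hsx2 (sq_nonneg _) hM0.le) hcos1
          (abs_nonneg _) (by positivity : (0:ℝ) ≤ M * ((x - a) / 2) ^ 2),
        mul_le_mul_of_nonneg_left hsin_lb
          (by positivity : (0:ℝ) ≤ M / (2 * m) * (x - a) * 2)]
    have hlim : Tendsto (fun x => M / (2 * m) * (x - a)) (𝓝[>] a) (𝓝 0) := by
      have h : Tendsto (fun x : ℝ => M / (2 * m) * (x - a)) (𝓝 a)
          (𝓝 (M / (2 * m) * (a - a))) := (Continuous.tendsto (by continuity) a)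
      simp only [sub_self, mul_zero] at h
      exact h.mono_left nhdsWithin_le_nhds
    exact squeeze_zero_norm' hev hlim
  -- limit of Psi at the right endpoint
  have T2 : Tendsto (Psi f a) (𝓝[<] b) (𝓝 0) := by
    have hev : ∀ᶠ x in 𝓝[<] b, |Psi f a x| ≤ M / (2 * m) * (b - x) := by
      have h1 : Ioo a b ∈ 𝓝[<] b := Ioo_mem_nhdsLT_of_mem ⟨hab, le_refl b⟩
      have h2 : ∀ᶠ x in 𝓝[<] b, (f b - f x) / 2 < 1 := by
        have hco : Tendsto (fun x => (f b - f x) / 2) (𝓝[<] b) (𝓝 ((f b - f b) / 2)) :=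
          ((tendsto_const_nhds.sub
            ((hf.1.continuous.tendsto b).mono_left nhdsWithin_le_nhds)).div_const 2)
        simp only [sub_self, zero_div] at hco
        exact hco.eventually_lt_const one_pos
      filter_upwards [h1, h2] with x hx hη1
      have hxb : 0 < b - x := sub_pos.mpr hx.2
      have hηp : 0 < (f b - f x) / 2 := by
        have := hsm hx.2
        linarith
      have hθη : (f x - f a) / 2 = π - (f b - f x) / 2 := by
        rw [hfb]
        ring
      have hsθη : sin ((f x - f a) / 2) = sin ((f b - f x) / 2) := by
        rw [hθη, Real.sin_pi_sub]
      have hsp : 0 < sin ((f b - f x) / 2) := by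
        have := hsinpos x hx
        rwa [hsθη] at this
      have hηlb : m * (b - x) / 2 ≤ (f b - f x) / 2 := by
        have := hgrow2 x (Ioo_subset_Icc_self hx)
        linarith
      have hsin_lb : m * (b - x) / 4 ≤ sin ((f b - f x) / 2) := by
        have hcube := Real.sin_gt_sub_cube hηp
        have h3 : ((f b - f x) / 2) ^ 3 ≤ (f b - f x) / 2 := by
          nlinarith [mul_nonneg (mul_nonneg hηp.le hηp.le) (sub_nonneg.mpr hη1.le),
            mul_nonneg hηp.le (sub_nonneg.mpr hη1.le)]
        nlinarith [hcube, hηlb, h3, mul_pos hm0 hxb]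
      have hslb : (0:ℝ) < 2 * sin ((f b - f x) / 2) := by linarith
      have hsxeq : sin ((x - a) / 2) = sin ((b - x) / 2) := by
        have h : (x - a) / 2 = π - (b - x) / 2 := by simp only [hb]; ring
        rw [h, Real.sin_pi_sub]
      have hsx2 : sin ((x - a) / 2) ^ 2 ≤ ((b - x) / 2) ^ 2 := by
        rw [hsxeq]
        have h := Real.sin_le (by linarith : (0:ℝ) ≤ (b - x) / 2)
        have h0 : 0 ≤ sin ((b - x) / 2) := by
          apply Real.sin_nonneg_of_nonneg_of_le_pi
          · linarith
          · simp only [hb] at hx; nlinarith [hx.1]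
        nlinarith
      have hpM : deriv f x ≤ M := hMge x (Ioo_subset_Icc_self hx)
      have hpx : 0 < deriv f x := hf.2.1 x
      have habs : |Psi f a x| =
          deriv f x * sin ((x - a) / 2) ^ 2 * |cos ((f x - f a) / 2)| /
            (2 * sin ((f b - f x) / 2)) := by
        unfold Psi
        rw [hsθη, abs_div, abs_mul, abs_mul, abs_of_pos hpx, abs_of_nonneg (sq_nonneg _),
          abs_of_pos hslb]
      rw [habs, div_le_iff₀ hslb]
      have hcos1 : |cos ((f x - f a) / 2)| ≤ 1 := Real.abs_cos_le_one _
      have hidentity : M / (2 * m) * (b - x) * (2 * (m * (b - x) / 4))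
          = M * ((b - x) / 2) ^ 2 := by
        field_simp
        ring
      nlinarith [mul_le_mul (mul_le_mul hpM hsx2 (sq_nonneg _) hM0.le) hcos1
          (abs_nonneg _) (by positivity : (0:ℝ) ≤ M * ((b - x) / 2) ^ 2),
        mul_le_mul_of_nonneg_left hsin_lb
          (by positivity : (0:ℝ) ≤ M / (2 * m) * (b - x) * 2)]
    have hlim : Tendsto (fun x => M / (2 * m) * (b - x)) (𝓝[<] b) (𝓝 0) := by
      have h : Tendsto (fun x : ℝ => M / (2 * m) * (b - x)) (𝓝 b)
          (𝓝 (M / (2 * m) * (b - b))) := (Continuous.tendsto (by continuity) b)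
      simp only [sub_self, mul_zero] at h
      exact h.mono_left nhdsWithin_le_nhds
    exact squeeze_zero_norm' hev hlim
  -- step 1: Psi ≤ F on the interior
  have step1 : ∀ t ∈ Ioo a b, Psi f a t ≤ F t := by
    intro t ht
    have hev : ∀ᶠ u in 𝓝[>] a, Psi f a t - Psi f a u ≤ F t - F u := by
      filter_upwards [Ioo_mem_nhdsGT_of_mem ⟨le_refl a, ht.1⟩] with u hu
      exact key u ⟨hu.1, hu.2.trans ht.2⟩ t ht hu.2.le
    have l1 : Tendsto (fun u => Psi f a t - Psi f a u) (𝓝[>] a) (𝓝 (Psi f a t - 0)) :=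
      tendsto_const_nhds.sub T1
    have l2 : Tendsto (fun u => F t - F u) (𝓝[>] a) (𝓝 (F t - F a)) :=
      tendsto_const_nhds.sub ((hFc.tendsto a).mono_left nhdsWithin_le_nhds)
    have := le_of_tendsto_of_tendsto l1 l2 hev
    rw [hFa] at this
    linarith
  -- step 2: pass to the limit at b
  have step2 : 0 ≤ F b := by
    have hev : ∀ᶠ t in 𝓝[<] b, Psi f a t ≤ F t := by
      filter_upwards [Ioo_mem_nhdsLT_of_mem ⟨hab, le_refl b⟩] with t ht
      exact step1 t ht
    exact le_of_tendsto_of_tendsto T2 ((hFc.tendsto b).mono_left nhdsWithin_le_nhds) hev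
  exact step2


lemma integrand_eq (hf : IsCircleDiffeoLift f) (x : ℝ) :
    -(deriv f x) ^ 2 + (deriv (deriv f) x / deriv f x) ^ 2
      = 4 * Ig f 0 x + 4 * Ig f π x - 1 := by
  have hp := hf.2.1 x
  have hpy := sin_sq_add_cos_sq (x / 2)
  have hs : sin ((x - π) / 2) = -cos (x / 2) := by
    rw [show (x - π) / 2 = x / 2 - π / 2 by ring, Real.sin_sub_pi_div_two]
  have hc : cos ((x - π) / 2) = sin (x / 2) := by
    rw [show (x - π) / 2 = x / 2 - π / 2 by ring, Real.cos_sub_pi_div_two]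
  unfold Ig
  rw [hs, hc, sub_zero]
  field_simp
  linear_combination (-4 * deriv f x ^ 2 + 4 * deriv f x ^ 4
    - 4 * deriv (deriv f) x ^ 2) * hpy

end SchwartzAux

open SchwartzAux in
/-- Schwartz's inequality: for every circle-diffeomorphism lift `f`,
`(1/(2π)) ∫₀^{2π} (−f'² + (f''/f')²) ≥ −1`, i.e. `H[−1; f] ≥ −1`. -/
theorem renormEnergy_neg_one_ge (f : ℝ → ℝ) (hf : IsCircleDiffeoLift f) :
    -1 ≤ (1 / (2 * π)) * ∫ x in (0:ℝ)..(2 * π),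
        (-(deriv f x) ^ 2 + (deriv (deriv f) x / deriv f x) ^ 2) ∧
    -1 ≤ renormEnergy (fun _ => (-1 : ℝ)) f := by
  have hπ := Real.pi_pos
  -- the two core inequalities
  have hcore0 : 0 ≤ ∫ x in (0:ℝ)..(2 * π), Ig f 0 x := by
    have := core hf 0
    rwa [zero_add] at this
  have hcoreπ : 0 ≤ ∫ x in (0:ℝ)..(2 * π), Ig f π x := by
    have h := core hf π
    have hshift := (periodic_Ig hf π).intervalIntegral_add_eq π 0
    rw [hshift, zero_add] at h
    exact h
  -- rewrite the integrand
  have hsplit : (∫ x in (0:ℝ)..(2 * π),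
        (-(deriv f x) ^ 2 + (deriv (deriv f) x / deriv f x) ^ 2))
      = 4 * (∫ x in (0:ℝ)..(2 * π), Ig f 0 x)
        + 4 * (∫ x in (0:ℝ)..(2 * π), Ig f π x) - 2 * π := by
    have hcongr : (∫ x in (0:ℝ)..(2 * π),
          (-(deriv f x) ^ 2 + (deriv (deriv f) x / deriv f x) ^ 2))
        = ∫ x in (0:ℝ)..(2 * π), (4 * Ig f 0 x + 4 * Ig f π x - 1) :=
      intervalIntegral.integral_congr (fun x _ => integrand_eq hf x)
    rw [hcongr]
    have hi0 : IntervalIntegrable (fun x => 4 * Ig f 0 x) volume 0 (2 * π) :=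
      (continuous_const.mul (cont_Ig hf 0)).intervalIntegrable _ _
    have hiπ : IntervalIntegrable (fun x => 4 * Ig f π x) volume 0 (2 * π) :=
      (continuous_const.mul (cont_Ig hf π)).intervalIntegrable _ _
    rw [intervalIntegral.integral_sub (hi0.add hiπ) (intervalIntegrable_const),
      intervalIntegral.integral_add hi0 hiπ,
      intervalIntegral.integral_const_mul, intervalIntegral.integral_const_mul,
      intervalIntegral.integral_const]
    simp [smul_eq_mul]
    try ring
  have hmain : -1 ≤ (1 / (2 * π)) * ∫ x in (0:ℝ)..(2 * π),
      (-(deriv f x) ^ 2 + (deriv (deriv f) x / deriv f x) ^ 2) := by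
    set J := ∫ x in (0:ℝ)..(2 * π),
      (-(deriv f x) ^ 2 + (deriv (deriv f) x / deriv f x) ^ 2) with hJ
    have hJge : -(2 * π) ≤ J := by
      rw [hsplit]
      nlinarith [hcore0, hcoreπ]
    have h2π : (0:ℝ) < 2 * π := by linarith
    have hquot : (1 / (2 * π)) * (2 * π) = 1 := by
      field_simp
    nlinarith [mul_le_mul_of_nonneg_left hJge (le_of_lt (by positivity : (0:ℝ) < 1 / (2 * π)))]
  constructor
  · exact hmain
  · unfold renormEnergy
    have : (∫ x in (0:ℝ)..(2 * π),
          ((fun _ => (-1:ℝ)) (f x) * (deriv f x) ^ 2 + (deriv (deriv f) x / deriv f x) ^ 2))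
        = ∫ x in (0:ℝ)..(2 * π),
          (-(deriv f x) ^ 2 + (deriv (deriv f) x / deriv f x) ^ 2) := by
      apply intervalIntegral.integral_congr
      intro x _
      simp [neg_one_mul]
    rw [this]
    exact hmain
end

section
/- For every continuous 2π-periodic function μ : ℝ → ℝ and every real number C there exists a circle-diffeomorphism lift f with H[μ; f] > C; that is, the renormalized energy functional f ↦ H[μ; f] is always unbounded from above. -/
open Real

section aux

variable (n : ℕ)

private noncomputable def wigF (n : ℕ) : ℝ → ℝ := fun x => x - Real.cos (n * x) / (2 * n)

private noncomputable def wigG (n : ℕ) : ℝ → ℝ := fun x => 1 + Real.sin (n * x) / 2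

private lemma wigG_pos (x : ℝ) : (0:ℝ) < wigG n x := by
  have := Real.neg_one_le_sin (n * x)
  unfold wigG; nlinarith

private lemma wigG_le (x : ℝ) : wigG n x ≤ 3 / 2 := by
  have := Real.sin_le_one (n * x)
  unfold wigG; nlinarith

private lemma wigG_ge (x : ℝ) : (1:ℝ) / 2 ≤ wigG n x := by
  have := Real.neg_one_le_sin (n * x)
  unfold wigG; nlinarith

private lemma wigF_hasDeriv (hn : (n:ℝ) ≠ 0) (x : ℝ) :
    HasDerivAt (wigF n) (wigG n x) x := by
  have h1 : HasDerivAt (fun y : ℝ => (n:ℝ) * y) ((n:ℝ) * 1) x :=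
    (hasDerivAt_id x).const_mul _
  have h2 := (h1.cos).div_const (2 * n)
  have h3 := (hasDerivAt_id x).sub h2
  refine h3.congr_deriv ?_
  unfold wigG
  field_simp
  ring

private lemma wigF_deriv (hn : (n:ℝ) ≠ 0) : deriv (wigF n) = wigG n :=
  funext fun x => (wigF_hasDeriv n hn x).deriv

private lemma wigG_hasDeriv (x : ℝ) :
    HasDerivAt (wigG n) ((n:ℝ) * Real.cos (n * x) / 2) x := by
  have h1 : HasDerivAt (fun y : ℝ => (n:ℝ) * y) ((n:ℝ) * 1) x :=
    (hasDerivAt_id x).const_mul _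
  have h2 := (hasDerivAt_const x (1:ℝ)).add (h1.sin.div_const 2)
  refine h2.congr_deriv ?_
  ring

private lemma wigG_deriv : deriv (wigG n) = fun x => (n:ℝ) * Real.cos (n * x) / 2 :=
  funext fun x => (wigG_hasDeriv n x).deriv

private lemma wigF_contDiff : ContDiff ℝ (⊤ : ℕ∞) (wigF n) := by
  unfold wigF
  exact contDiff_id.sub ((Real.contDiff_cos.comp (contDiff_const.mul contDiff_id)).div_const _)

private lemma wigG_continuous : Continuous (wigG n) := by
  unfold wigG; fun_prop

private lemma wigF_continuous : Continuous (wigF n) := (wigF_contDiff n).continuous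

private lemma wigF_lift (hn : (n:ℝ) ≠ 0) : IsCircleDiffeoLift (wigF n) := by
  refine ⟨wigF_contDiff n, fun x => ?_, fun x => ?_⟩
  · rw [wigF_deriv n hn]; exact wigG_pos n x
  · unfold wigF
    have : (n:ℝ) * (x + 2 * π) = n * x + n * (2 * π) := by ring
    rw [this, Real.cos_add_nat_mul_two_pi]
    ring

end aux

/-- The renormalized energy functional `f ↦ H[μ; f]` is always unbounded from
above: for every continuous `2π`-periodic `μ` and every `C` there is a
circle-diffeomorphism lift `f` with `H[μ; f] > C`. -/
theorem renormEnergy_unbounded_above (μ : ℝ → ℝ) (hc : Continuous μ)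
    (hp : Function.Periodic μ (2 * π)) (C : ℝ) :
    ∃ f : ℝ → ℝ, IsCircleDiffeoLift f ∧ C < renormEnergy μ f := by
  -- bound on μ
  obtain ⟨M, hM⟩ := (isBounded_iff_forall_norm_le.mp
    (hp.isBounded_of_continuous (by positivity) hc) : ∃ M, ∀ y ∈ Set.range μ, ‖y‖ ≤ M)
  have hM' : ∀ x, -M ≤ μ x := fun x => by
    have := hM (μ x) ⟨x, rfl⟩
    rw [Real.norm_eq_abs] at this
    linarith [abs_le.mp this |>.1]
  have hM0 : 0 ≤ M := le_trans (norm_nonneg _) (hM (μ 0) ⟨0, rfl⟩)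
  -- choose n
  obtain ⟨n, hn⟩ := exists_nat_gt (max 1 (18 * (C + 9 / 4 * M)))
  have hn1 : (1:ℝ) ≤ n := le_of_lt (lt_of_le_of_lt (le_max_left _ _) hn)
  have hnC : 18 * (C + 9 / 4 * M) < n := lt_of_le_of_lt (le_max_right _ _) hn
  have hn0 : (n:ℝ) ≠ 0 := by linarith
  refine ⟨wigF n, wigF_lift n hn0, ?_⟩
  -- rewrite energy
  unfold renormEnergy
  rw [wigF_deriv n hn0, wigG_deriv n]
  show C < 1 / (2 * π) * ∫ x in (0:ℝ)..(2 * π),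
    (μ (wigF n x) * wigG n x ^ 2 + ((n:ℝ) * Real.cos (n * x) / 2 / wigG n x) ^ 2)
  -- pointwise lower bound
  have hpt : ∀ x, -(9 / 4 * M) + (n:ℝ)^2 / 9 * Real.cos (n * x) ^ 2 ≤
      μ (wigF n x) * wigG n x ^ 2 + ((n:ℝ) * Real.cos (n * x) / 2 / wigG n x) ^ 2 := by
    intro x
    have hgp := wigG_pos n x
    have hgl := wigG_le n x
    have hgg := wigG_ge n x
    have h1 : -(9 / 4 * M) ≤ μ (wigF n x) * wigG n x ^ 2 := by
      have h := hM' (wigF n x)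
      have hgsq : wigG n x ^ 2 ≤ 9 / 4 := by nlinarith
      nlinarith [mul_nonneg (show (0:ℝ) ≤ μ (wigF n x) + M by linarith) (sq_nonneg (wigG n x)),
        mul_le_mul_of_nonneg_left hgsq hM0]
    have h2 : (n:ℝ)^2 / 9 * Real.cos (n * x) ^ 2 ≤
        ((n:ℝ) * Real.cos (n * x) / 2 / wigG n x) ^ 2 := by
      rw [div_pow, le_div_iff₀ (by positivity)]
      have hgsq : wigG n x ^ 2 ≤ 9 / 4 := by nlinarith
      have hdsq : ((n:ℝ) * Real.cos (n * x) / 2) ^ 2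
          = (n:ℝ)^2 * Real.cos (n*x)^2 / 4 := by ring
      rw [hdsq]
      nlinarith [mul_le_mul_of_nonneg_left hgsq
        (show (0:ℝ) ≤ (n:ℝ)^2 / 9 * Real.cos (n*x)^2 by positivity)]
    exact add_le_add h1 h2
  -- integrability
  have hcont1 : Continuous fun x => μ (wigF n x) * wigG n x ^ 2 + ((n:ℝ) * Real.cos (n * x) / 2 / wigG n x) ^ 2 := by
    have := wigG_continuous n
    have := wigF_continuous n
    fun_prop (disch := exact fun x => (wigG_pos n x).ne')
  have hcont2 : Continuous fun x : ℝ => -(9 / 4 * M) + (n:ℝ)^2 / 9 * Real.cos (n * x) ^ 2 := by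
    fun_prop
  have hint2 : IntervalIntegrable (fun x : ℝ => -(9 / 4 * M) + (n:ℝ)^2 / 9 * Real.cos (n * x) ^ 2)
      MeasureTheory.volume 0 (2*π) := hcont2.intervalIntegrable 0 (2*π)
  have hint1 : IntervalIntegrable
      (fun x => μ (wigF n x) * wigG n x ^ 2 + ((n:ℝ) * Real.cos (n * x) / 2 / wigG n x) ^ 2)
      MeasureTheory.volume 0 (2*π) := hcont1.intervalIntegrable 0 (2*π)
  have hmono := intervalIntegral.integral_mono_on (by positivity : (0:ℝ) ≤ 2 * π)
    hint2 hint1 (fun x _ => hpt x)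
  -- compute the lower integral
  have hcos : (∫ x in (0:ℝ)..(2*π), Real.cos ((n:ℝ) * x) ^ 2) = π := by
    rw [intervalIntegral.integral_comp_mul_left (fun u => Real.cos u ^ 2) hn0]
    rw [mul_zero, integral_cos_sq]
    have h2 : (n:ℝ) * (2 * π) = (n:ℕ) * (2 * π) := by norm_num
    have h3 : Real.sin ((n:ℝ) * (2 * π)) = 0 := by
      have := Real.sin_add_nat_mul_two_pi 0 n
      simpa using this
    rw [h3, Real.sin_zero, Real.cos_zero, smul_eq_mul]
    field_simp
    ring
  have hlow : (∫ x in (0:ℝ)..(2*π),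
      (-(9 / 4 * M) + (n:ℝ)^2 / 9 * Real.cos ((n:ℝ) * x) ^ 2))
      = -(9 / 4 * M) * (2 * π) + (n:ℝ)^2 / 9 * π := by
    have hintc : IntervalIntegrable (fun x : ℝ => (n:ℝ)^2 / 9 * Real.cos ((n:ℝ) * x) ^ 2)
        MeasureTheory.volume 0 (2*π) := (by fun_prop : Continuous _).intervalIntegrable 0 (2*π)
    rw [intervalIntegral.integral_add intervalIntegrable_const hintc]
    rw [intervalIntegral.integral_const_mul, hcos, intervalIntegral.integral_const]
    simp [smul_eq_mul]
    ring
  rw [hlow] at hmono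
  -- final estimate
  have hpi := Real.pi_pos
  have hkey : -(9/4*M) + (n:ℝ)^2 / 18 ≤ (1 / (2 * π)) *
      ∫ x in (0:ℝ)..(2*π), (μ (wigF n x) * wigG n x ^ 2 + ((n:ℝ) * Real.cos (n * x) / 2 / wigG n x) ^ 2) := by
    calc -(9/4*M) + (n:ℝ)^2 / 18
        = (1 / (2*π)) * (-(9 / 4 * M) * (2 * π) + (n:ℝ)^2 / 9 * π) := by
          field_simp; ring
      _ ≤ _ := mul_le_mul_of_nonneg_left hmono (by positivity)
  have hnsq : 18 * (C + 9/4*M) < (n:ℝ)^2 := by nlinarith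
  calc C = -(9/4*M) + (18 * (C + 9/4*M)) / 18 := by ring
    _ < -(9/4*M) + (n:ℝ)^2 / 18 := by linarith
    _ ≤ _ := hkey
end

section
/- Let μ : ℝ → ℝ be continuous, 2π-periodic, and satisfy μ(x) ≥ −1 for all x. Then for every circle-diffeomorphism lift f, H[μ; f] ≥ (1/π) ∫₀^{2π} μ(x) dx − max_{x ∈ [0,2π]} μ(x). In particular, the infimum of H[μ; ·] over all circle-diffeomorphism lifts is finite. -/
open Real

namespace RnE
variable {f : ℝ → ℝ}

lemma cinf (hf : ContDiff ℝ (⊤ : ℕ∞) f) : ContDiff ℝ (⊤:ℕ∞) f := hf.of_le (by simp)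

lemma contDiff_deriv (hf : ContDiff ℝ (⊤ : ℕ∞) f) : ContDiff ℝ (⊤:ℕ∞) (deriv f) :=
  (contDiff_infty_iff_deriv.mp (cinf hf)).2

lemma contF (hf : ContDiff ℝ (⊤ : ℕ∞) f) : Continuous (deriv f) := (contDiff_deriv hf).continuous

lemma contF' (hf : ContDiff ℝ (⊤ : ℕ∞) f) : Continuous (deriv (deriv f)) :=
  ((contDiff_infty_iff_deriv.mp (contDiff_deriv hf)).2).continuous

lemma hasDF (hf : ContDiff ℝ (⊤ : ℕ∞) f) (x : ℝ) : HasDerivAt f (deriv f x) x :=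
  ((contDiff_infty_iff_deriv.mp (cinf hf)).1 x).hasDerivAt

lemma hasDF' (hf : ContDiff ℝ (⊤ : ℕ∞) f) (x : ℝ) : HasDerivAt (deriv f) (deriv (deriv f) x) x :=
  ((contDiff_infty_iff_deriv.mp (contDiff_deriv hf)).1 x).hasDerivAt

lemma perF (hper : ∀ x, f (x + 2 * π) = f x + 2 * π) :
    Function.Periodic (deriv f) (2 * π) := by
  intro x
  have h1 : deriv (fun y => f (y + 2 * π)) x = deriv f (x + 2 * π) := by
    rw [deriv_comp_add_const]
  have h2 : (fun y => f (y + 2 * π)) = fun y => f y + 2 * π := funext hper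
  rw [← h1, h2, deriv_add_const]

lemma perF' (hper : ∀ x, f (x + 2 * π) = f x + 2 * π) :
    Function.Periodic (deriv (deriv f)) (2 * π) := by
  intro x
  have h1 : deriv (fun y => deriv f (y + 2 * π)) x = deriv (deriv f) (x + 2 * π) := by
    rw [deriv_comp_add_const]
  have h2 : (fun y => deriv f (y + 2 * π)) = fun y => deriv f y := funext (perF hper)
  rw [← h1, h2]

lemma smono (hd : ∀ x, 0 < deriv f x) : StrictMono f := strictMono_of_deriv_pos hd


noncomputable def rt (f : ℝ → ℝ) (x : ℝ) : ℝ := Real.sqrt (deriv f x)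
noncomputable def phi (f : ℝ → ℝ) (s x : ℝ) : ℝ := sin ((x - s)/2) * rt f x
noncomputable def pp (f : ℝ → ℝ) (s x : ℝ) : ℝ :=
  cos ((x - s)/2) / 2 * rt f x + sin ((x - s)/2) * (deriv (deriv f) x / (2 * rt f x))
noncomputable def gg (f : ℝ → ℝ) (s x : ℝ) : ℝ :=
  (pp f s x)^2 / deriv f x - (phi f s x)^2 * deriv f x / 4

lemma rt_pos (hd : ∀ x, 0 < deriv f x) (x : ℝ) : 0 < rt f x := Real.sqrt_pos.mpr (hd x)

lemma rt_sq (hd : ∀ x, 0 < deriv f x) (x : ℝ) : rt f x ^ 2 = deriv f x := by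
  rw [rt, sq_sqrt (hd x).le]

lemma hasDerivAt_rt (hf : ContDiff ℝ (⊤ : ℕ∞) f) (hd : ∀ x, 0 < deriv f x) (x : ℝ) :
    HasDerivAt (rt f) (deriv (deriv f) x / (2 * rt f x)) x := by
  have h := (Real.hasDerivAt_sqrt (ne_of_gt (hd x))).comp x (hasDF' hf x)
  refine h.congr_deriv ?_; symm
  rw [rt]; field_simp

lemma contRt (hf : ContDiff ℝ (⊤ : ℕ∞) f) : Continuous (rt f) :=
  Real.continuous_sqrt.comp (contF hf)

lemma hasDerivAt_phi (hf : ContDiff ℝ (⊤ : ℕ∞) f) (hd : ∀ x, 0 < deriv f x) (s x : ℝ) :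
    HasDerivAt (phi f s) (pp f s x) x := by
  have h1 : HasDerivAt (fun x : ℝ => sin ((x - s)/2)) (cos ((x - s)/2) * (1/2)) x := by
    have : HasDerivAt (fun x : ℝ => (x - s)/2) (1/2) x :=
      ((hasDerivAt_id x).sub_const s).div_const 2
    simpa using this.sin
  have h := h1.mul (hasDerivAt_rt hf hd x)
  refine h.congr_deriv ?_; symm
  rw [pp]; ring

lemma phi_anti (hd : ∀ x, 0 < deriv f x) (hper : ∀ x, f (x + 2 * π) = f x + 2 * π) (s x : ℝ) :
    phi f s (x + 2 * π) = - phi f s x := by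
  have : (x + 2*π - s)/2 = (x - s)/2 + π := by ring
  rw [phi, phi, this, Real.sin_add_pi, rt, rt, perF hper x]; ring

lemma pp_anti (hd : ∀ x, 0 < deriv f x) (hper : ∀ x, f (x + 2 * π) = f x + 2 * π) (s x : ℝ) :
    pp f s (x + 2 * π) = - pp f s x := by
  have h : (x + 2*π - s)/2 = (x - s)/2 + π := by ring
  rw [pp, pp, h, Real.sin_add_pi, Real.cos_add_pi, rt, rt, perF hper x, perF' hper x]; ring

lemma gg_per (hd : ∀ x, 0 < deriv f x) (hper : ∀ x, f (x + 2 * π) = f x + 2 * π) (s : ℝ) :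
    Function.Periodic (gg f s) (2 * π) := by
  intro x
  rw [gg, gg, phi_anti hd hper, pp_anti hd hper, perF hper x]; ring

lemma cont_pp (hf : ContDiff ℝ (⊤ : ℕ∞) f) (hd : ∀ x, 0 < deriv f x) (s : ℝ) :
    Continuous (pp f s) := by
  apply Continuous.add
  · exact (((Real.continuous_cos.comp (by fun_prop)).div_const 2)).mul (contRt hf)
  · exact (Real.continuous_sin.comp (by fun_prop)).mul
      ((contF' hf).div (continuous_const.mul (contRt hf)) (fun x => by have := rt_pos hd x; positivity))

lemma cont_gg (hf : ContDiff ℝ (⊤ : ℕ∞) f) (hd : ∀ x, 0 < deriv f x) (s : ℝ) :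
    Continuous (gg f s) := by
  apply Continuous.sub
  · exact ((cont_pp hf hd s).pow 2).div (contF hf) (fun x => (hd x).ne')
  · exact ((((Real.continuous_sin.comp (by fun_prop)).mul (contRt hf)).pow 2).mul (contF hf)).div_const 4


noncomputable def vv (f : ℝ → ℝ) (s x : ℝ) : ℝ := (f x - f s)/2
noncomputable def cc (f : ℝ → ℝ) (s x : ℝ) : ℝ := -(cos (vv f s x) / (2 * sin (vv f s x)))
noncomputable def DD (f : ℝ → ℝ) (s x : ℝ) : ℝ := cc f s x * (phi f s x)^2
noncomputable def EE (f : ℝ → ℝ) (s x : ℝ) : ℝ :=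
  deriv f x * (phi f s x)^2 / (4 * sin (vv f s x)^2) + cc f s x * (2 * phi f s x * pp f s x)

lemma hasDerivAt_vv (hf : ContDiff ℝ (⊤ : ℕ∞) f) (s x : ℝ) :
    HasDerivAt (vv f s) (deriv f x / 2) x :=
  ((hasDF hf x).sub_const (f s)).div_const 2

lemma hasDerivAt_cc (hf : ContDiff ℝ (⊤ : ℕ∞) f) {s x : ℝ} (hsin : sin (vv f s x) ≠ 0) :
    HasDerivAt (cc f s) (deriv f x / (4 * sin (vv f s x)^2)) x := by
  have hvv := hasDerivAt_vv hf s x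
  have h1 : HasDerivAt (fun y => cos (vv f s y)) (-sin (vv f s x) * (deriv f x / 2)) x := hvv.cos
  have h2 : HasDerivAt (fun y => 2 * sin (vv f s y)) (2 * (cos (vv f s x) * (deriv f x / 2))) x :=
    (hvv.sin).const_mul 2
  have h2' : (2 : ℝ) * sin (vv f s x) ≠ 0 := by simp [hsin]
  have h := (h1.div h2 h2').neg
  refine h.congr_deriv ?_; symm
  have hpy := Real.sin_sq_add_cos_sq (vv f s x)
  field_simp
  ring_nf
  linear_combination (-4 * deriv f x) * hpy

lemma hasDerivAt_DD (hf : ContDiff ℝ (⊤ : ℕ∞) f) (hd : ∀ x, 0 < deriv f x) {s x : ℝ}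
    (hsin : sin (vv f s x) ≠ 0) : HasDerivAt (DD f s) (EE f s x) x := by
  have h := (hasDerivAt_cc hf hsin).mul ((hasDerivAt_phi hf hd s x).pow 2)
  refine h.congr_deriv ?_; symm
  rw [EE]; push_cast; simp only [Pi.pow_apply]; ring

lemma gg_identity (hd : ∀ x, 0 < deriv f x) {s x : ℝ} (hsin : sin (vv f s x) ≠ 0) :
    gg f s x = (pp f s x + cc f s x * deriv f x * phi f s x)^2 / deriv f x - EE f s x := by
  have hF : deriv f x ≠ 0 := (hd x).ne'
  have hc2 : (cc f s x)^2 = 1/(4 * sin (vv f s x)^2) - 1/4 := by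
    rw [cc]
    have hpy := Real.sin_sq_add_cos_sq (vv f s x)
    field_simp
    ring_nf
    linear_combination 4 * hpy
  have hexp : (pp f s x + cc f s x * deriv f x * phi f s x)^2 / deriv f x
      = (pp f s x)^2 / deriv f x + cc f s x * (2 * phi f s x * pp f s x)
        + (cc f s x)^2 * (deriv f x * (phi f s x)^2) := by
    field_simp; ring
  rw [gg, EE, hexp, hc2]
  have hs2 : sin (vv f s x)^2 ≠ 0 := pow_ne_zero 2 hsin
  field_simp
  ring


lemma cont_phi (hf : ContDiff ℝ (⊤ : ℕ∞) f) (s : ℝ) : Continuous (phi f s) :=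
  (Real.continuous_sin.comp (by fun_prop)).mul (contRt hf)

lemma subint (hf : ContDiff ℝ (⊤ : ℕ∞) f) (hd : ∀ x, 0 < deriv f x)
    (hper : ∀ x, f (x + 2 * π) = f x + 2 * π) {s a b : ℝ}
    (ha : s < a) (hab : a ≤ b) (hb : b < s + 2*π) :
    DD f s a - DD f s b ≤ ∫ x in a..b, gg f s x := by
  have hmono : StrictMono f := strictMono_of_deriv_pos hd
  have huIcc : Set.uIcc a b = Set.Icc a b := Set.uIcc_of_le hab
  have hsin : ∀ x ∈ Set.Icc a b, 0 < sin (vv f s x) := by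
    intro x hx
    have h1 : s < x := lt_of_lt_of_le ha hx.1
    have h2 : x < s + 2*π := lt_of_le_of_lt hx.2 hb
    have hfx1 : f s < f x := hmono h1
    have hfx2 : f x < f s + 2*π := by have := hmono h2; rwa [hper s] at this
    apply Real.sin_pos_of_pos_of_lt_pi
    · rw [vv]; linarith
    · rw [vv]; linarith
  have hcontvv : Continuous (vv f s) := ((cinf hf).continuous.sub continuous_const).div_const 2
  have hcontsin : Continuous fun x => sin (vv f s x) := Real.continuous_sin.comp hcontvv
  have hccOn : ContinuousOn (cc f s) (Set.Icc a b) := by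
    apply ContinuousOn.neg
    apply ContinuousOn.div (Real.continuous_cos.comp hcontvv).continuousOn
      (continuous_const.mul hcontsin).continuousOn
    intro x hx
    have := hsin x hx
    simp only [Pi.mul_apply]
    positivity
  have hEEOn : ContinuousOn (EE f s) (Set.Icc a b) := by
    apply ContinuousOn.add
    · apply ContinuousOn.div ((contF hf).mul ((cont_phi hf s).pow 2)).continuousOn
        (continuous_const.mul (hcontsin.pow 2)).continuousOn
      intro x hx
      have := hsin x hx
      simp only [Pi.mul_apply, Pi.pow_apply]
      positivity
    · exact hccOn.mul (((continuous_const.mul (cont_phi hf s)).mul (cont_pp hf hd s))).continuousOn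
  have hEEint : IntervalIntegrable (EE f s) MeasureTheory.volume a b := by
    rw [intervalIntegrable_iff_integrableOn_Icc_of_le hab]
    exact hEEOn.integrableOn_compact isCompact_Icc
  have hggint : IntervalIntegrable (gg f s) MeasureTheory.volume a b :=
    (cont_gg hf hd s).intervalIntegrable a b
  have hftc : ∫ x in a..b, EE f s x = DD f s b - DD f s a := by
    apply intervalIntegral.integral_eq_sub_of_hasDerivAt
    · intro x hx
      rw [huIcc] at hx
      exact hasDerivAt_DD hf hd (hsin x hx).ne'
    · exact hEEint
  have hcong : ∫ x in a..b, (gg f s x + EE f s x)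
      = ∫ x in a..b, (pp f s x + cc f s x * deriv f x * phi f s x)^2 / deriv f x := by
    apply intervalIntegral.integral_congr
    intro x hx
    rw [huIcc] at hx
    have := gg_identity hd (hsin x hx).ne'
    simp only []
    linarith [this]
  have hpos : 0 ≤ ∫ x in a..b, (gg f s x + EE f s x) := by
    rw [hcong]
    apply intervalIntegral.integral_nonneg hab
    intro u hu
    have := hd u
    positivity
  have hadd : ∫ x in a..b, (gg f s x + EE f s x)
      = (∫ x in a..b, gg f s x) + ∫ x in a..b, EE f s x :=
    intervalIntegral.integral_add hggint hEEint
  rw [hadd, hftc] at hpos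
  linarith


lemma bound_aux {σ q m' M' η c : ℝ} (hσl : m'*η/π ≤ σ) (hσ0 : 0 < σ) (hm : 0 < m')
    (hM : 0 < M') (hη : 0 < η) (hq : 0 ≤ q) (hq' : q ≤ η^2/4 * M')
    (hc : |c| ≤ 1/(2*σ)) : |c * q| ≤ π*M'*η/(8*m') := by
  have hπ := Real.pi_pos
  have hσ1 : 0 < m'*η/π := by positivity
  have h1 : |c * q| ≤ 1/(2*σ) * (η^2/4 * M') := by
    rw [abs_mul]
    apply mul_le_mul hc (by rwa [abs_of_nonneg hq]) (abs_nonneg q) (by positivity)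
  have h2 : 1/(2*σ) ≤ 1/(2*(m'*η/π)) := by
    apply one_div_le_one_div_of_le (by positivity)
    linarith
  have h3 : 1/(2*(m'*η/π)) * (η^2/4 * M') = π*M'*η/(8*m') := by
    field_simp
    ring
  calc |c * q| ≤ 1/(2*σ) * (η^2/4 * M') := h1
    _ ≤ 1/(2*(m'*η/π)) * (η^2/4 * M') := by
        apply mul_le_mul_of_nonneg_right h2 (by positivity)
    _ = π*M'*η/(8*m') := h3


lemma lemK (hf : ContDiff ℝ (⊤ : ℕ∞) f) (hd : ∀ x, 0 < deriv f x)
    (hper : ∀ x, f (x + 2 * π) = f x + 2 * π) (s : ℝ) :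
    0 ≤ ∫ x in s..s + 2*π, gg f s x := by
  set t := s + 2*π with ht
  have hπ : (0:ℝ) < π := Real.pi_pos
  have hπ3 : (3:ℝ) < π := Real.pi_gt_three
  have hst : s < t := by simp only [ht]; linarith
  have hft : f t = f s + 2*π := hper s
  have hmono : StrictMono f := strictMono_of_deriv_pos hd
  obtain ⟨xm, hxm, hxmin⟩ := (isCompact_Icc (a := s) (b := t)).exists_isMinOn
    ⟨s, le_refl s, hst.le⟩ (contF hf).continuousOn
  obtain ⟨xM, hxM, hxmax⟩ := (isCompact_Icc (a := s) (b := t)).exists_isMaxOn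
    ⟨s, le_refl s, hst.le⟩ (contF hf).continuousOn
  set m := deriv f xm with hm
  set M := deriv f xM with hM
  have hm0 : 0 < m := hd xm
  have hM0 : 0 < M := hd xM
  have hmM : ∀ x ∈ Set.Icc s t, m ≤ deriv f x ∧ deriv f x ≤ M := fun x hx =>
    ⟨hxmin hx, hxmax hx⟩
  obtain ⟨K, hK⟩ := (isCompact_Icc (a := s) (b := t)).exists_bound_of_continuousOn
    (cont_gg hf hd s).continuousOn
  have hK0 : 0 ≤ K := le_trans (norm_nonneg _) (hK s ⟨le_refl s, hst.le⟩)
  have hfsub : ∀ x ∈ Set.Icc s t, ∀ y ∈ Set.Icc s t, x ≤ y →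
      m * (y - x) ≤ f y - f x ∧ f y - f x ≤ M * (y - x) := by
    intro x hx y hy hxy
    have hsub : Set.Icc x y ⊆ Set.Icc s t := Set.Icc_subset_Icc hx.1 hy.2
    have hint : ∫ u in x..y, deriv f u = f y - f x :=
      intervalIntegral.integral_eq_sub_of_hasDerivAt
        (fun u hu => hasDF hf u) ((contF hf).intervalIntegrable x y)
    constructor
    · have := intervalIntegral.integral_mono_on (μ := MeasureTheory.volume) hxy
        (intervalIntegrable_const (c := m)) ((contF hf).intervalIntegrable x y)
        (fun u hu => (hmM u (hsub hu)).1)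
      rw [hint] at this
      simpa [smul_eq_mul, mul_comm] using this
    · have := intervalIntegral.integral_mono_on (μ := MeasureTheory.volume) hxy
        ((contF hf).intervalIntegrable x y) (intervalIntegrable_const (c := M))
        (fun u hu => (hmM u (hsub hu)).2)
      rw [hint] at this
      simpa [smul_eq_mul, mul_comm] using this
  -- boundary bound
  set Cb := π*M/(8*m) with hCb
  have hCb0 : 0 < Cb := by rw [hCb]; positivity
  have hbnd : ∀ η : ℝ, 0 < η → η ≤ 1 → η ≤ 1/M →
      |DD f s (s+η)| ≤ Cb * η ∧ |DD f s (t-η)| ≤ Cb * η := by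
    intro η hη0 hη1 hηM
    have hη2π : η < 2*π := by linarith
    have haI : s + η ∈ Set.Icc s t := ⟨by linarith, by simp only [ht]; linarith⟩
    have hbI : t - η ∈ Set.Icc s t := ⟨by simp only [ht]; linarith, by linarith⟩
    have hsI : s ∈ Set.Icc s t := ⟨le_refl s, hst.le⟩
    have htI : t ∈ Set.Icc s t := ⟨hst.le, le_refl t⟩
    have hMη : M * η ≤ 1 := by
      have := (le_div_iff₀ hM0).mp hηM
      linarith [mul_comm η M]
    constructor
    · -- at a = s + η
      obtain ⟨hl, hu⟩ := hfsub s hsI (s+η) haI (by linarith)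
      have hsimp : s + η - s = η := by ring
      rw [hsimp] at hl hu
      have hmη : 0 < m * η := mul_pos hm0 hη0
      have hv0 : 0 < vv f s (s+η) := by rw [vv]; linarith
      have hvu : vv f s (s+η) ≤ 1/2 := by rw [vv]; linarith
      have hvl : m*η/π ≤ sin (vv f s (s+η)) := by
        have hj := Real.mul_le_sin hv0.le (by linarith)
        have h2 : m*η/2 ≤ vv f s (s+η) := by rw [vv]; linarith
        have h3 : 2/π * (m*η/2) ≤ 2/π * vv f s (s+η) :=
          mul_le_mul_of_nonneg_left h2 (by positivity)
        have h4 : m*η/π = 2/π * (m*η/2) := by field_simp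
        linarith
      have hσ0 : 0 < sin (vv f s (s+η)) := lt_of_lt_of_le (by positivity) hvl
      have hccb : |cc f s (s+η)| ≤ 1/(2 * sin (vv f s (s+η))) := by
        rw [cc, abs_neg, abs_div, abs_of_pos (by positivity : (0:ℝ) < 2 * sin (vv f s (s+η)))]
        gcongr
        exact Real.abs_cos_le_one _
      have hphib : (phi f s (s+η))^2 ≤ η^2/4 * M := by
        rw [phi, mul_pow, rt_sq hd]
        have h1 : sin ((s+η-s)/2) ^2 ≤ (η/2)^2 := by
          rw [show (s+η-s)/2 = η/2 by ring]
          have hsn : 0 ≤ sin (η/2) := Real.sin_nonneg_of_nonneg_of_le_pi (by linarith) (by linarith)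
          have hsl : sin (η/2) ≤ η/2 := Real.sin_le (by linarith)
          nlinarith
        have p1 : sin ((s+η-s)/2)^2 * deriv f (s+η) ≤ sin ((s+η-s)/2)^2 * M :=
          mul_le_mul_of_nonneg_left (hmM _ haI).2 (sq_nonneg _)
        have p2 : sin ((s+η-s)/2)^2 * M ≤ (η/2)^2 * M :=
          mul_le_mul_of_nonneg_right h1 hM0.le
        have p3 : (η/2)^2 * M = η^2/4 * M := by ring
        linarith
      have hba := bound_aux hvl hσ0 hm0 hM0 hη0 (sq_nonneg _) hphib hccb
      rw [DD]
      calc |cc f s (s+η) * phi f s (s+η) ^ 2| ≤ π*M*η/(8*m) := hba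
        _ = Cb * η := by rw [hCb]; ring
    · -- at b = t - η
      obtain ⟨hl, hu⟩ := hfsub (t-η) hbI t htI (by linarith)
      have hsimp : t - (t - η) = η := by ring
      rw [hsimp] at hl hu
      have hmη : 0 < m * η := mul_pos hm0 hη0
      have hv0 : 0 < π - vv f s (t-η) := by rw [vv]; linarith [hft]
      have hvu : π - vv f s (t-η) ≤ 1/2 := by rw [vv]; linarith [hft]
      have hsineq : sin (vv f s (t-η)) = sin (π - vv f s (t-η)) :=
        (Real.sin_pi_sub _).symm
      have hvl : m*η/π ≤ sin (vv f s (t-η)) := by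
        have hj := Real.mul_le_sin hv0.le (by linarith)
        have h2 : m*η/2 ≤ π - vv f s (t-η) := by rw [vv]; linarith [hft]
        have h3 : 2/π * (m*η/2) ≤ 2/π * (π - vv f s (t-η)) :=
          mul_le_mul_of_nonneg_left h2 (by positivity)
        have h4 : m*η/π = 2/π * (m*η/2) := by field_simp
        rw [hsineq]
        linarith
      have hσ0 : 0 < sin (vv f s (t-η)) := lt_of_lt_of_le (by positivity) hvl
      have hccb : |cc f s (t-η)| ≤ 1/(2 * sin (vv f s (t-η))) := by
        rw [cc, abs_neg, abs_div, abs_of_pos (by positivity : (0:ℝ) < 2 * sin (vv f s (t-η)))]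
        gcongr
        exact Real.abs_cos_le_one _
      have hphib : (phi f s (t-η))^2 ≤ η^2/4 * M := by
        rw [phi, mul_pow, rt_sq hd]
        have h1 : sin ((t-η-s)/2) ^2 ≤ (η/2)^2 := by
          rw [show (t-η-s)/2 = π - η/2 by rw [ht]; ring, Real.sin_pi_sub]
          have hsn : 0 ≤ sin (η/2) := Real.sin_nonneg_of_nonneg_of_le_pi (by linarith) (by linarith)
          have hsl : sin (η/2) ≤ η/2 := Real.sin_le (by linarith)
          nlinarith
        have p1 : sin ((t-η-s)/2)^2 * deriv f (t-η) ≤ sin ((t-η-s)/2)^2 * M :=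
          mul_le_mul_of_nonneg_left (hmM _ hbI).2 (sq_nonneg _)
        have p2 : sin ((t-η-s)/2)^2 * M ≤ (η/2)^2 * M :=
          mul_le_mul_of_nonneg_right h1 hM0.le
        have p3 : (η/2)^2 * M = η^2/4 * M := by ring
        linarith
      have hba := bound_aux hvl hσ0 hm0 hM0 hη0 (sq_nonneg _) hphib hccb
      rw [DD]
      calc |cc f s (t-η) * phi f s (t-η) ^ 2| ≤ π*M*η/(8*m) := hba
        _ = Cb * η := by rw [hCb]; ring
  -- epsilon argument
  have hint : ∀ u v : ℝ, IntervalIntegrable (gg f s) MeasureTheory.volume u v :=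
    fun u v => (cont_gg hf hd s).intervalIntegrable u v
  have key : ∀ ε : ℝ, 0 < ε → -ε ≤ ∫ x in s..t, gg f s x := by
    intro ε hε
    set D := 2*K + 2*Cb + 1 with hD
    have hD0 : 0 < D := by positivity
    set η := min (min 1 (1/M)) (ε/D) with hη
    have hη0 : 0 < η := lt_min (lt_min one_pos (by positivity)) (by positivity)
    have hη1 : η ≤ 1 := le_trans (min_le_left _ _) (min_le_left _ _)
    have hηM : η ≤ 1/M := le_trans (min_le_left _ _) (min_le_right _ _)
    have hηε : η ≤ ε/D := min_le_right _ _
    have hηD : η * D ≤ ε := by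
      have := (le_div_iff₀ hD0).mp hηε
      linarith
    obtain ⟨hDa, hDb⟩ := hbnd η hη0 hη1 hηM
    have hab : s + η ≤ t - η := by rw [ht]; linarith
    have hsub := subint hf hd hper (show s < s + η by linarith) hab
      (show t - η < s + 2*π by rw [← ht]; linarith)
    have e1 : (∫ x in s..s+η, gg f s x) + (∫ x in s+η..t, gg f s x)
        = ∫ x in s..t, gg f s x :=
      intervalIntegral.integral_add_adjacent_intervals (hint _ _) (hint _ _)
    have e2 : (∫ x in s+η..t-η, gg f s x) + (∫ x in t-η..t, gg f s x)
        = ∫ x in s+η..t, gg f s x :=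
      intervalIntegral.integral_add_adjacent_intervals (hint _ _) (hint _ _)
    have b1 : |∫ x in s..s+η, gg f s x| ≤ K * η := by
      have := intervalIntegral.norm_integral_le_of_norm_le_const (C := K)
        (f := gg f s) (a := s) (b := s+η) ?_
      · rw [Real.norm_eq_abs] at this
        calc |∫ x in s..s+η, gg f s x| ≤ K * |s + η - s| := this
          _ = K * η := by rw [show s + η - s = η by ring, abs_of_pos hη0]
      · intro x hx
        apply hK
        have : Set.uIoc s (s+η) ⊆ Set.Icc s t := by
          rw [Set.uIoc_of_le (by linarith : s ≤ s + η)]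
          intro z hz
          exact ⟨hz.1.le, le_trans hz.2 (by rw [ht]; linarith)⟩
        exact this hx
    have b3 : |∫ x in t-η..t, gg f s x| ≤ K * η := by
      have := intervalIntegral.norm_integral_le_of_norm_le_const (C := K)
        (f := gg f s) (a := t-η) (b := t) ?_
      · rw [Real.norm_eq_abs] at this
        calc |∫ x in t-η..t, gg f s x| ≤ K * |t - (t - η)| := this
          _ = K * η := by rw [show t - (t - η) = η by ring, abs_of_pos hη0]
      · intro x hx
        apply hK
        have : Set.uIoc (t-η) t ⊆ Set.Icc s t := by
          rw [Set.uIoc_of_le (by linarith : t - η ≤ t)]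
          intro z hz
          exact ⟨le_trans (by rw [ht]; linarith) hz.1.le, hz.2⟩
        exact this hx
    have b2 : -(2*Cb*η) ≤ ∫ x in s+η..t-η, gg f s x := by
      have h1 := abs_le.mp hDa
      have h2 := abs_le.mp hDb
      have : DD f s (s+η) - DD f s (t-η) ≥ -(2*Cb*η) := by linarith [h1.1, h2.2]
      linarith [hsub]
    have hb1 := (abs_le.mp b1).1
    have hb3 := (abs_le.mp b3).1
    have hexp : η * D = 2*(K*η) + 2*(Cb*η) + η := by rw [hD]; ring
    linarith [e1, e2]
  by_contra hcon
  push_neg at hcon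
  have := key (-(∫ x in s..t, gg f s x)/2) (by linarith)
  linarith


lemma gg_sum (hd : ∀ x, 0 < deriv f x) (x : ℝ) :
    gg f 0 x + gg f (-π) x
      = 1/4 + (deriv (deriv f) x / deriv f x)^2/4 - (deriv f x)^2/4 := by
  have hr2 : rt f x ^ 2 = deriv f x := rt_sq hd x
  have hr0 : 0 < rt f x := rt_pos hd x
  have hF : deriv f x ≠ 0 := (hd x).ne'
  have hrne : rt f x ≠ 0 := hr0.ne'
  have hpy := Real.sin_sq_add_cos_sq (x/2)
  rw [gg, gg, pp, pp, phi, phi,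
    show (x - -π)/2 = x/2 + π/2 by ring,
    show (x - 0)/2 = x/2 by ring,
    Real.sin_add_pi_div_two, Real.cos_add_pi_div_two]
  have e1 : (cos (x/2) / 2 * rt f x + sin (x/2) * (deriv (deriv f) x / (2 * rt f x)))^2
      + (-sin (x/2) / 2 * rt f x + cos (x/2) * (deriv (deriv f) x / (2 * rt f x)))^2
      = (sin (x/2)^2 + cos (x/2)^2) * (rt f x ^2/4 + (deriv (deriv f) x)^2/(4 * rt f x ^2)) := by
    field_simp
    ring
  have e2 : (sin (x/2) * rt f x)^2 + (cos (x/2) * rt f x)^2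
      = (sin (x/2)^2 + cos (x/2)^2) * rt f x ^ 2 := by ring
  rw [hpy, hr2] at e1 e2
  rw [one_mul] at e1 e2
  have goal2 : (cos (x/2) / 2 * rt f x + sin (x/2) * (deriv (deriv f) x / (2 * rt f x)))^2 / deriv f x
        - (sin (x/2) * rt f x)^2 * deriv f x / 4
      + ((-sin (x/2) / 2 * rt f x + cos (x/2) * (deriv (deriv f) x / (2 * rt f x)))^2 / deriv f x
        - (cos (x/2) * rt f x)^2 * deriv f x / 4)
      = 1/4 + (deriv (deriv f) x / deriv f x)^2/4 - (deriv f x)^2/4 := by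
    have expand : (cos (x/2) / 2 * rt f x + sin (x/2) * (deriv (deriv f) x / (2 * rt f x)))^2 / deriv f x
        - (sin (x/2) * rt f x)^2 * deriv f x / 4
      + ((-sin (x/2) / 2 * rt f x + cos (x/2) * (deriv (deriv f) x / (2 * rt f x)))^2 / deriv f x
        - (cos (x/2) * rt f x)^2 * deriv f x / 4)
      = ((cos (x/2) / 2 * rt f x + sin (x/2) * (deriv (deriv f) x / (2 * rt f x)))^2
          + (-sin (x/2) / 2 * rt f x + cos (x/2) * (deriv (deriv f) x / (2 * rt f x)))^2) / deriv f x
        - ((sin (x/2) * rt f x)^2 + (cos (x/2) * rt f x)^2) * deriv f x / 4 := by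
      ring
    rw [expand, e1, e2]
    field_simp
  exact goal2

lemma key (hf : ContDiff ℝ (⊤ : ℕ∞) f) (hd : ∀ x, 0 < deriv f x)
    (hper : ∀ x, f (x + 2 * π) = f x + 2 * π) :
    (∫ x in (0:ℝ)..2*π, (deriv f x)^2) - 2*π
      ≤ ∫ x in (0:ℝ)..2*π, (deriv (deriv f) x / deriv f x)^2 := by
  have hπ := Real.pi_pos
  have k0 : 0 ≤ ∫ x in (0:ℝ)..0 + 2*π, gg f 0 x := lemK hf hd hper 0
  have k1 : 0 ≤ ∫ x in (-π)..(-π) + 2*π, gg f (-π) x := lemK hf hd hper (-π)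
  have hshift : ∫ x in (-π)..(-π) + 2*π, gg f (-π) x = ∫ x in (0:ℝ)..0 + 2*π, gg f (-π) x :=
    (gg_per hd hper (-π)).intervalIntegral_add_eq (-π) 0
  rw [hshift] at k1
  rw [zero_add] at k0 k1
  have hints : ∀ s : ℝ, IntervalIntegrable (gg f s) MeasureTheory.volume 0 (2*π) :=
    fun s => (cont_gg hf hd s).intervalIntegrable 0 (2*π)
  have hadd : ∫ x in (0:ℝ)..2*π, (gg f 0 x + gg f (-π) x)
      = (∫ x in (0:ℝ)..2*π, gg f 0 x) + ∫ x in (0:ℝ)..2*π, gg f (-π) x :=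
    intervalIntegral.integral_add (hints 0) (hints (-π))
  have hcong : ∫ x in (0:ℝ)..2*π, (gg f 0 x + gg f (-π) x)
      = ∫ x in (0:ℝ)..2*π, (1/4 + (deriv (deriv f) x / deriv f x)^2/4 - (deriv f x)^2/4) := by
    apply intervalIntegral.integral_congr
    intro x _
    exact gg_sum hd x
  have hw : Continuous fun x => (deriv (deriv f) x / deriv f x)^2 :=
    ((contF' hf).div (contF hf) (fun x => (hd x).ne')).pow 2
  have hF2 : Continuous fun x => (deriv f x)^2 := (contF hf).pow 2
  have hsplit : ∫ x in (0:ℝ)..2*π, (1/4 + (deriv (deriv f) x / deriv f x)^2/4 - (deriv f x)^2/4)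
      = π/2 + (∫ x in (0:ℝ)..2*π, (deriv (deriv f) x / deriv f x)^2)/4
        - (∫ x in (0:ℝ)..2*π, (deriv f x)^2)/4 := by
    have d1 : (∫ x in (0:ℝ)..2*π, (deriv (deriv f) x / deriv f x)^2/4)
        = (∫ x in (0:ℝ)..2*π, (deriv (deriv f) x / deriv f x)^2)/4 :=
      intervalIntegral.integral_div _ _
    have d2 : (∫ x in (0:ℝ)..2*π, (deriv f x)^2/4)
        = (∫ x in (0:ℝ)..2*π, (deriv f x)^2)/4 :=
      intervalIntegral.integral_div _ _
    rw [intervalIntegral.integral_sub, intervalIntegral.integral_add, d1, d2,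
      intervalIntegral.integral_const, smul_eq_mul]
    · ring
    · exact intervalIntegrable_const
    · exact (hw.div_const 4).intervalIntegrable 0 (2*π)
    · exact (intervalIntegrable_const).add ((hw.div_const 4).intervalIntegrable 0 (2*π))
    · exact (hF2.div_const 4).intervalIntegrable 0 (2*π)
  have := hcong ▸ hadd
  linarith [k0, k1, hsplit ▸ (hcong ▸ (hadd ▸ (add_nonneg k0 k1 : (0:ℝ) ≤ _)))]


end RnE

open RnE in
/-- If `μ ≥ −1` then `H[μ; f] ≥ 2 H[μ; id] − max μ = (1/π) ∫₀^{2π} μ − max μ`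
for every circle-diffeomorphism lift `f`; in particular the infimum of
`H[μ; ·]` over all circle-diffeomorphism lifts is finite. -/
theorem renormEnergy_lower_bound (μ : ℝ → ℝ) (hc : Continuous μ)
    (hp : Function.Periodic μ (2 * π)) (hb : ∀ x, -1 ≤ μ x) :
    (∀ f : ℝ → ℝ, IsCircleDiffeoLift f →
        (1 / π) * (∫ x in (0:ℝ)..(2 * π), μ x) - sSup (μ '' Set.Icc 0 (2 * π))
          ≤ renormEnergy μ f) ∧
      BddBelow {E : ℝ | ∃ f : ℝ → ℝ, IsCircleDiffeoLift f ∧ E = renormEnergy μ f} := by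
  have hπ := Real.pi_pos
  set M := sSup (μ '' Set.Icc 0 (2 * π)) with hMdef
  have hbdd : BddAbove (μ '' Set.Icc 0 (2 * π)) := (isCompact_Icc.image hc).bddAbove
  have hμM : ∀ y, μ y ≤ M := by
    intro y
    have h2π : (0:ℝ) < 2 * π := by linarith
    have hz1 := Int.sub_floor_div_mul_nonneg y h2π
    have hz2 := Int.sub_floor_div_mul_lt y h2π
    have hzper : μ (y - ⌊y/(2*π)⌋ * (2*π)) = μ y := hp.sub_int_mul_eq _
    calc μ y = μ (y - ⌊y/(2*π)⌋ * (2*π)) := hzper.symm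
      _ ≤ M := le_csSup hbdd ⟨_, ⟨hz1, hz2.le⟩, rfl⟩
  have main : ∀ f : ℝ → ℝ, IsCircleDiffeoLift f →
      (1 / π) * (∫ x in (0:ℝ)..(2 * π), μ x) - M ≤ renormEnergy μ f := by
    intro f hlift
    obtain ⟨hf, hd, hper⟩ := hlift
    set A := ∫ x in (0:ℝ)..(2 * π), μ x with hA
    -- continuity facts
    have cμ : Continuous fun x => μ (f x) := hc.comp (cinf hf).continuous
    have cF := contF hf
    have cF2 : Continuous fun x => (deriv f x)^2 := cF.pow 2
    have cw : Continuous fun x => (deriv (deriv f) x / deriv f x)^2 :=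
      ((contF' hf).div cF fun x => (hd x).ne').pow 2
    have c1 : Continuous fun x => μ (f x) * (deriv f x)^2 := cμ.mul cF2
    have c2 : Continuous fun x => (1 + μ (f x)) * (deriv f x)^2 :=
      (continuous_const.add cμ).mul cF2
    have c3 : Continuous fun x => (1 + μ (f x)) * deriv f x :=
      (continuous_const.add cμ).mul cF
    have c4 : Continuous fun x => 1 + μ (f x) := continuous_const.add cμ
    have int : ∀ {g : ℝ → ℝ}, Continuous g →
        IntervalIntegrable g MeasureTheory.volume 0 (2*π) :=
      fun hg => hg.intervalIntegrable 0 (2*π)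
    -- split the energy integral
    have i1 : ∫ x in (0:ℝ)..2*π, (μ (f x) * (deriv f x)^2 + (deriv (deriv f) x / deriv f x)^2)
        = (∫ x in (0:ℝ)..2*π, μ (f x) * (deriv f x)^2)
          + ∫ x in (0:ℝ)..2*π, (deriv (deriv f) x / deriv f x)^2 :=
      intervalIntegral.integral_add (int c1) (int cw)
    have i2 : ∫ x in (0:ℝ)..2*π, μ (f x) * (deriv f x)^2
        = (∫ x in (0:ℝ)..2*π, (1 + μ (f x)) * (deriv f x)^2)
          - ∫ x in (0:ℝ)..2*π, (deriv f x)^2 := by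
      rw [← intervalIntegral.integral_sub (int c2) (int cF2)]
      apply intervalIntegral.integral_congr
      intro x _
      ring
    have i3 : (∫ x in (0:ℝ)..2*π, (2 * ((1 + μ (f x)) * deriv f x) - (1 + μ (f x))))
        ≤ ∫ x in (0:ℝ)..2*π, (1 + μ (f x)) * (deriv f x)^2 := by
      apply intervalIntegral.integral_mono_on (by linarith)
        (int (g := fun x => 2 * ((1 + μ (f x)) * deriv f x) - (1 + μ (f x))) ((continuous_const.mul c3).sub c4)) (int c2)
      intro x _
      have h1 : 0 ≤ 1 + μ (f x) := by linarith [hb (f x)]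
      nlinarith [mul_nonneg h1 (sq_nonneg (deriv f x - 1))]
    have i4 : (∫ x in (0:ℝ)..2*π, (2 * ((1 + μ (f x)) * deriv f x) - (1 + μ (f x))))
        = 2 * (∫ x in (0:ℝ)..2*π, (1 + μ (f x)) * deriv f x)
          - ∫ x in (0:ℝ)..2*π, (1 + μ (f x)) := by
      rw [intervalIntegral.integral_sub (int (g := fun x => 2 * ((1 + μ (f x)) * deriv f x)) (continuous_const.mul c3)) (int c4),
        intervalIntegral.integral_const_mul]
    -- change of variables
    have h20 : f (2*π) = f 0 + 2*π := by have := hper 0; rwa [zero_add] at this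
    have i5 : ∫ x in (0:ℝ)..2*π, (1 + μ (f x)) * deriv f x = 2*π + A := by
      have hcv := intervalIntegral.integral_comp_smul_deriv (a := (0:ℝ)) (b := 2*π)
        (f := f) (f' := deriv f) (g := fun y => 1 + μ y)
        (fun x _ => hasDF hf x) cF.continuousOn (continuous_const.add hc)
      have e1 : ∫ x in (0:ℝ)..2*π, (1 + μ (f x)) * deriv f x
          = ∫ x in (0:ℝ)..2*π, deriv f x • ((fun y => 1 + μ y) ∘ f) x := by
        apply intervalIntegral.integral_congr
        intro x _
        simp only [smul_eq_mul, Function.comp_apply]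
        try ring
      have hp1 : Function.Periodic (fun y => 1 + μ y) (2*π) := fun y => by simp [hp y]
      have e2 : ∫ y in (f 0)..(f 0 + 2*π), (1 + μ y) = ∫ y in (0:ℝ)..(0 + 2*π), (1 + μ y) :=
        hp1.intervalIntegral_add_eq (f 0) 0
      have e3 : ∫ y in (0:ℝ)..2*π, (1 + μ y) = 2*π + A := by
        rw [intervalIntegral.integral_add intervalIntegrable_const (int hc),
          intervalIntegral.integral_const]
        simp only [smul_eq_mul, sub_zero]
        try ring
      rw [e1, hcv, h20, e2, zero_add, e3]
    have i6 : ∫ x in (0:ℝ)..2*π, (1 + μ (f x)) ≤ 2*π * (1 + M) := by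
      have := intervalIntegral.integral_mono_on (μ := MeasureTheory.volume)
        (by linarith : (0:ℝ) ≤ 2*π) (int c4) (intervalIntegrable_const (c := 1 + M))
        (fun x _ => by linarith [hμM (f x)])
      rw [intervalIntegral.integral_const] at this
      calc ∫ x in (0:ℝ)..2*π, (1 + μ (f x)) ≤ (2*π - 0) • (1 + M) := this
        _ = 2*π * (1 + M) := by simp [smul_eq_mul]
    have i7 := key hf hd hper
    -- combine
    have hJ : 2*A - 2*π*M ≤ ∫ x in (0:ℝ)..2*π,
        (μ (f x) * (deriv f x)^2 + (deriv (deriv f) x / deriv f x)^2) := by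
      rw [i1, i2]
      linarith [i3, i4, i5, i6, i7]
    rw [renormEnergy]
    have hfin : (1/(2*π)) * (2*A - 2*π*M) ≤ (1/(2*π)) * ∫ x in (0:ℝ)..2*π,
        (μ (f x) * (deriv f x)^2 + (deriv (deriv f) x / deriv f x)^2) := by
      apply mul_le_mul_of_nonneg_left hJ (by positivity)
    have heq : (1/(2*π)) * (2*A - 2*π*M) = (1/π) * A - M := by
      field_simp
    rw [heq] at hfin
    exact le_trans (le_of_eq rfl) hfin
  refine ⟨main, ⟨(1 / π) * (∫ x in (0:ℝ)..(2 * π), μ x) - M, ?_⟩⟩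
  rintro E ⟨f, hlift, rfl⟩
  exact main f hlift
end

section
/- Let m ≥ −1 be a real number and let μ ≡ m be the constant function. Then for every circle-diffeomorphism lift f, H[m; f] = (1/(2π)) ∫₀^{2π} ( m·f'(x)² + (f''(x)/f'(x))² ) dx ≥ m, and equality holds for the identity map f(x) = x. Hence the infimum of H[m; ·] over all circle-diffeomorphism lifts equals m and is attained. -/
open Real

open MeasureTheory intervalIntegral Set

lemma mul_cos_le_sin {t : ℝ} (h0 : 0 ≤ t) (h : t ≤ π / 2) : t * Real.cos t ≤ Real.sin t := by
  rcases eq_or_lt_of_le h0 with h0 | h0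
  · simp [← h0]
  rcases eq_or_lt_of_le h with h | h
  · rw [h, Real.cos_pi_div_two, Real.sin_pi_div_two]; norm_num
  have hc : 0 < Real.cos t := Real.cos_pos_of_mem_Ioo ⟨by linarith [Real.pi_pos], h⟩
  have := Real.lt_tan h0 h
  rw [Real.tan_eq_sin_div_cos] at this
  calc t * Real.cos t ≤ (Real.sin t / Real.cos t) * Real.cos t := by
        apply mul_le_mul_of_nonneg_right this.le hc.le
    _ = Real.sin t := by field_simp

lemma abs_cot_le {t : ℝ} (h0 : 0 < t) (hπ : t < π) :
    |Real.cos t / Real.sin t| ≤ 1 / t + 1 / (π - t) := by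
  have hs : 0 < Real.sin t := Real.sin_pos_of_pos_of_lt_pi h0 hπ
  have h1 : 0 < 1 / t := by positivity
  have h2 : 0 < 1 / (π - t) := by have := sub_pos.mpr hπ; positivity
  rcases le_or_gt t (π / 2) with hle | hlt
  · have hc : 0 ≤ Real.cos t := Real.cos_nonneg_of_mem_Icc ⟨by linarith [Real.pi_pos], hle⟩
    rw [abs_of_nonneg (div_nonneg hc hs.le)]
    have : Real.cos t / Real.sin t ≤ 1 / t := by
      rw [div_le_div_iff₀ hs h0]
      have := mul_cos_le_sin h0.le hle
      nlinarith
    linarith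
  · -- use s = π - t
    have hc : Real.cos t ≤ 0 := Real.cos_nonpos_of_pi_div_two_le_of_le hlt.le (by linarith [Real.pi_pos])
    rw [abs_of_nonpos (div_nonpos_of_nonpos_of_nonneg hc hs.le)]
    have hs' : Real.sin (π - t) = Real.sin t := Real.sin_pi_sub t
    have hc' : Real.cos (π - t) = -Real.cos t := Real.cos_pi_sub t
    have h0' : 0 < π - t := sub_pos.mpr hπ
    have hle' : π - t ≤ π / 2 := by linarith
    have key := mul_cos_le_sin h0'.le hle'
    rw [hs', hc'] at key
    have : -(Real.cos t / Real.sin t) ≤ 1 / (π - t) := by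
      rw [← neg_div, div_le_div_iff₀ hs h0']
      nlinarith
    linarith

lemma deriv_lift_periodic {f : ℝ → ℝ} (hper : ∀ x, f (x + 2*π) = f x + 2*π) (x : ℝ) :
    deriv f (x + 2*π) = deriv f x := by
  have h : (fun y => f (y + 2*π)) = fun y => f y + 2*π := funext hper
  calc deriv f (x + 2*π) = deriv (fun y => f (y + 2*π)) x := (deriv_comp_add_const f (2*π) x).symm
    _ = deriv (fun y => f y + 2*π) x := by rw [h]
    _ = deriv f x := by simp

lemma deriv_antiperiodic {c : ℝ → ℝ} (hanti : ∀ x, c (x + 2*π) = - c x) (x : ℝ) :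
    deriv c (x + 2*π) = - deriv c x := by
  have h : (fun y => c (y + 2*π)) = fun y => - c y := funext hanti
  calc deriv c (x + 2*π) = deriv (fun y => c (y + 2*π)) x := (deriv_comp_add_const c (2*π) x).symm
    _ = deriv (fun y => - c y) x := by rw [h]
    _ = - deriv c x := deriv.neg

set_option maxHeartbeats 1000000 in
lemma core_nonneg (f c : ℝ → ℝ) (hf : ContDiff ℝ (⊤ : ℕ∞) f) (hf' : ∀ x, 0 < deriv f x)
    (hper : ∀ x, f (x + 2*π) = f x + 2*π)
    (hc : ContDiff ℝ ((⊤:ℕ∞) : WithTop ℕ∞) c) (hanti : ∀ x, c (x + 2*π) = - c x)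
    (x₀ : ℝ) (hx₀ : c x₀ = 0) :
    0 ≤ ∫ x in x₀..(x₀ + 2*π), ((deriv c x) ^ 2 / deriv f x - (deriv f x / 4) * c x ^ 2) := by
  have hπ : (0:ℝ) < π := Real.pi_pos
  have hfd : Differentiable ℝ f := hf.differentiable (by simp)
  have hcd : Differentiable ℝ c := hc.differentiable (by simp)
  have hfi : ContDiff ℝ ((⊤:ℕ∞) : WithTop ℕ∞) f := hf.of_le (by simp)
  have hf'c : Continuous (deriv f) := ((contDiff_infty_iff_deriv.mp hfi).2).continuous
  have hc'c : Continuous (deriv c) := ((contDiff_infty_iff_deriv.mp hc).2).continuous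
  have hmono : StrictMono f := strictMono_of_deriv_pos hf'
  set L : ℝ → ℝ := fun x => (deriv c x) ^ 2 / deriv f x - (deriv f x / 4) * c x ^ 2 with hL
  have hLcont : Continuous L := by
    apply Continuous.sub
    · exact (hc'c.pow 2).div hf'c (fun x => (hf' x).ne')
    · exact (hf'c.div_const 4).mul (hc.continuous.pow 2)
  set g : ℝ → ℝ := fun x => (f x - f x₀) / 2 with hg
  set S : ℝ → ℝ := fun x => c x ^ 2 * (Real.cos (g x) / Real.sin (g x)) / 2 with hS
  set Q : ℝ → ℝ := fun x =>
    (deriv c x - c x * (deriv f x / 2) * (Real.cos (g x) / Real.sin (g x))) ^ 2 / deriv f x with hQ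
  have hQnonneg : ∀ x, 0 ≤ Q x := fun x => div_nonneg (sq_nonneg _) (hf' x).le
  have hgmem : ∀ x ∈ Ioo x₀ (x₀ + 2*π), 0 < g x ∧ g x < π := by
    intro x hx
    have h1 := hmono hx.1
    have h2 := hmono hx.2
    rw [hper x₀] at h2
    exact ⟨by simp only [hg]; linarith, by simp only [hg]; linarith⟩
  have hsin : ∀ x ∈ Ioo x₀ (x₀ + 2*π), 0 < Real.sin (g x) := fun x hx =>
    Real.sin_pos_of_pos_of_lt_pi (hgmem x hx).1 (hgmem x hx).2
  have hSderiv : ∀ x ∈ Ioo x₀ (x₀ + 2*π), HasDerivAt S (L x - Q x) x := by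
    intro x hx
    have hsx := hsin x hx
    have hgd : HasDerivAt g (deriv f x / 2) x := (((hfd x).hasDerivAt).sub_const (f x₀)).div_const 2
    have hcos : HasDerivAt (fun y => Real.cos (g y)) (-Real.sin (g x) * (deriv f x / 2)) x :=
      (Real.hasDerivAt_cos (g x)).comp x hgd
    have hsin' : HasDerivAt (fun y => Real.sin (g y)) (Real.cos (g x) * (deriv f x / 2)) x :=
      (Real.hasDerivAt_sin (g x)).comp x hgd
    have hKd : HasDerivAt (fun y => Real.cos (g y) / Real.sin (g y))
        ((-Real.sin (g x) * (deriv f x / 2) * Real.sin (g x) -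
          Real.cos (g x) * (Real.cos (g x) * (deriv f x / 2))) / Real.sin (g x) ^ 2) x :=
      hcos.div hsin' hsx.ne'
    have hc2 : HasDerivAt (fun y => c y ^ 2) (2 * c x * deriv c x) x := by
      exact (by simpa using ((hcd x).hasDerivAt).pow 2 : HasDerivAt (c ^ 2) (2 * c x * deriv c x) x)
    have hSd := (hc2.mul hKd).div_const 2
    have heq : (2 * c x * deriv c x * (Real.cos (g x) / Real.sin (g x)) + c x ^ 2 *
        ((-Real.sin (g x) * (deriv f x / 2) * Real.sin (g x) -
          Real.cos (g x) * (Real.cos (g x) * (deriv f x / 2))) / Real.sin (g x) ^ 2)) / 2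
        = L x - Q x := by
      have hfx : deriv f x ≠ 0 := (hf' x).ne'
      simp only [hL, hQ]
      field_simp
      ring
    rw [hS]
    rw [heq] at hSd
    exact hSd
  -- constants on the compact interval
  have hcpt : IsCompact (Icc x₀ (x₀ + 2*π)) := isCompact_Icc
  have hx₀mem : x₀ ∈ Icc x₀ (x₀ + 2*π) := ⟨le_refl _, by linarith⟩
  obtain ⟨Mc, hMc⟩ := hcpt.exists_bound_of_continuousOn hc'c.continuousOn
  obtain ⟨ML, hML⟩ := hcpt.exists_bound_of_continuousOn hLcont.continuousOn
  have hMc0 : 0 ≤ Mc := le_trans (norm_nonneg _) (hMc x₀ hx₀mem)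
  have hML0 : 0 ≤ ML := le_trans (norm_nonneg _) (hML x₀ hx₀mem)
  obtain ⟨z, hzmem, hzmin⟩ := hcpt.exists_isMinOn ⟨x₀, hx₀mem⟩ hf'c.continuousOn
  set mf := deriv f z with hmfdef
  have hmfpos : 0 < mf := hf' z
  have hmflb : ∀ x ∈ Icc x₀ (x₀ + 2*π), mf ≤ deriv f x := fun x hx => hzmin hx
  -- growth of c from its zero
  have hc2π : c (x₀ + 2*π) = 0 := by rw [hanti, hx₀, neg_zero]
  have hcgrow1 : ∀ x ∈ Icc x₀ (x₀ + 2*π), |c x| ≤ Mc * (x - x₀) := by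
    intro x hx
    have hftc : ∫ t in x₀..x, deriv c t = c x - c x₀ :=
      intervalIntegral.integral_deriv_eq_sub (fun t _ => hcd t) (hc'c.intervalIntegrable _ _)
    have hbd : ∀ t ∈ Set.uIoc x₀ x, ‖deriv c t‖ ≤ Mc := by
      intro t ht
      apply hMc
      rcases Set.mem_uIoc.mp ht with h | h
      · exact ⟨h.1.le, le_trans h.2 hx.2⟩
      · exact ⟨le_trans hx.1 h.1.le, by linarith [hx.2, h.2, hπ]⟩
    have := intervalIntegral.norm_integral_le_of_norm_le_const hbd
    rw [hftc] at this
    rw [hx₀, sub_zero] at this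
    rw [Real.norm_eq_abs] at this
    calc |c x| ≤ Mc * |x - x₀| := this
      _ = Mc * (x - x₀) := by rw [abs_of_nonneg (by linarith [hx.1])]
  have hcgrow2 : ∀ x ∈ Icc x₀ (x₀ + 2*π), |c x| ≤ Mc * (x₀ + 2*π - x) := by
    intro x hx
    have hftc : ∫ t in x..(x₀ + 2*π), deriv c t = c (x₀ + 2*π) - c x :=
      intervalIntegral.integral_deriv_eq_sub (fun t _ => hcd t) (hc'c.intervalIntegrable _ _)
    have hbd : ∀ t ∈ Set.uIoc x (x₀ + 2*π), ‖deriv c t‖ ≤ Mc := by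
      intro t ht
      apply hMc
      rcases Set.mem_uIoc.mp ht with h | h
      · exact ⟨le_trans hx.1 h.1.le, h.2⟩
      · exact ⟨by linarith [hx.1, h.1, hπ], le_trans h.2 hx.2⟩
    have := intervalIntegral.norm_integral_le_of_norm_le_const hbd
    rw [hftc, hc2π, zero_sub, norm_neg, Real.norm_eq_abs] at this
    calc |c x| ≤ Mc * |x₀ + 2*π - x| := this
      _ = Mc * (x₀ + 2*π - x) := by rw [abs_of_nonneg (by linarith [hx.2])]
  -- growth of f
  have hfgrow1 : ∀ x ∈ Icc x₀ (x₀ + 2*π), mf * (x - x₀) ≤ f x - f x₀ := by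
    intro x hx
    have hftc : ∫ t in x₀..x, deriv f t = f x - f x₀ :=
      intervalIntegral.integral_deriv_eq_sub (fun t _ => hfd t) (hf'c.intervalIntegrable _ _)
    have hmono' : (∫ t in x₀..x, (mf : ℝ)) ≤ ∫ t in x₀..x, deriv f t := by
      apply intervalIntegral.integral_mono_on hx.1 (intervalIntegrable_const)
        (hf'c.intervalIntegrable _ _)
      intro t ht
      exact hmflb t ⟨ht.1, le_trans ht.2 hx.2⟩
    rw [intervalIntegral.integral_const, smul_eq_mul] at hmono'
    rw [hftc] at hmono'
    linarith [hmono']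
  have hfgrow2 : ∀ x ∈ Icc x₀ (x₀ + 2*π), mf * (x₀ + 2*π - x) ≤ f x₀ + 2*π - f x := by
    intro x hx
    have hftc : ∫ t in x..(x₀ + 2*π), deriv f t = f (x₀ + 2*π) - f x :=
      intervalIntegral.integral_deriv_eq_sub (fun t _ => hfd t) (hf'c.intervalIntegrable _ _)
    have hmono' : (∫ t in x..(x₀ + 2*π), (mf : ℝ)) ≤ ∫ t in x..(x₀ + 2*π), deriv f t := by
      apply intervalIntegral.integral_mono_on hx.2 (intervalIntegrable_const)
        (hf'c.intervalIntegrable _ _)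
      intro t ht
      exact hmflb t ⟨le_trans hx.1 ht.1, ht.2⟩
    rw [intervalIntegral.integral_const, smul_eq_mul, hftc, hper x₀] at hmono'
    linarith [hmono']
  -- per-δ estimate
  have hstep : ∀ δ : ℝ, 0 < δ → δ < π →
      -((2*(2*Mc^2/mf) + 2*ML) * δ) ≤ ∫ x in x₀..(x₀ + 2*π), L x := by
    intro δ hδ0 hδπ
    set a := x₀ + δ with ha
    set b := x₀ + 2*π - δ with hb
    have hab : a ≤ b := by simp only [ha, hb]; linarith
    have haI : a ∈ Ioo x₀ (x₀ + 2*π) := ⟨by simp only [ha]; linarith, by simp only [ha]; linarith⟩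
    have hbI : b ∈ Ioo x₀ (x₀ + 2*π) := ⟨by simp only [hb]; linarith, by simp only [hb]; linarith⟩
    have hsub : Icc a b ⊆ Ioo x₀ (x₀ + 2*π) :=
      fun t ht => ⟨by linarith [ht.1, haI.1], by linarith [ht.2, hbI.2]⟩
    have hgcont : Continuous g := by
      rw [hg]; exact (hf.continuous.sub continuous_const).div_const 2
    have hQcont : ContinuousOn Q (Icc a b) := by
      rw [hQ]
      apply ContinuousOn.div _ hf'c.continuousOn (fun t ht => (hf' t).ne')
      apply ContinuousOn.pow
      apply ContinuousOn.sub hc'c.continuousOn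
      apply ContinuousOn.mul
      · exact (hc.continuous.mul (hf'c.div_const 2)).continuousOn
      · apply ContinuousOn.div
        · exact (Real.continuous_cos.comp hgcont).continuousOn
        · exact (Real.continuous_sin.comp hgcont).continuousOn
        · exact fun t ht => (hsin t (hsub ht)).ne'
    have hDint : IntervalIntegrable (fun x => L x - Q x) volume a b := by
      apply ContinuousOn.intervalIntegrable
      rw [uIcc_of_le hab]
      exact hLcont.continuousOn.sub hQcont
    have hftc : ∫ x in a..b, (L x - Q x) = S b - S a := by
      apply intervalIntegral.integral_eq_sub_of_hasDerivAt _ hDint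
      intro x hxx
      rw [uIcc_of_le hab] at hxx
      exact hSderiv x (hsub hxx)
    have hLint : IntervalIntegrable L volume a b := hLcont.intervalIntegrable _ _
    have hQint : IntervalIntegrable Q volume a b := by
      apply ContinuousOn.intervalIntegrable
      rw [uIcc_of_le hab]
      exact hQcont
    have hQpos : 0 ≤ ∫ x in a..b, Q x :=
      intervalIntegral.integral_nonneg hab (fun u _ => hQnonneg u)
    have hsubint : ∫ x in a..b, (L x - Q x) = (∫ x in a..b, L x) - ∫ x in a..b, Q x :=
      intervalIntegral.integral_sub hLint hQint
    have hLab : S b - S a ≤ ∫ x in a..b, L x := by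
      rw [hftc] at hsubint; linarith
    have hsplit : (∫ x in x₀..(x₀ + 2*π), L x) =
        (∫ x in x₀..a, L x) + (∫ x in a..b, L x) + (∫ x in b..(x₀ + 2*π), L x) := by
      have i1 : IntervalIntegrable L volume x₀ a := hLcont.intervalIntegrable _ _
      have i2 : IntervalIntegrable L volume a (x₀ + 2*π) := hLcont.intervalIntegrable _ _
      have i3 : IntervalIntegrable L volume a b := hLcont.intervalIntegrable _ _
      have i4 : IntervalIntegrable L volume b (x₀ + 2*π) := hLcont.intervalIntegrable _ _
      have h1 := intervalIntegral.integral_add_adjacent_intervals i1 i2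
      have h2 := intervalIntegral.integral_add_adjacent_intervals i3 i4
      linarith [h1, h2]
    have hend1 : |∫ x in x₀..a, L x| ≤ ML * δ := by
      have hbd : ∀ t ∈ Set.uIoc x₀ a, ‖L t‖ ≤ ML := by
        intro t ht
        rw [Set.uIoc_of_le haI.1.le] at ht
        exact hML t ⟨ht.1.le, by linarith [ht.2, haI.2]⟩
      have := intervalIntegral.norm_integral_le_of_norm_le_const hbd
      rw [Real.norm_eq_abs] at this
      calc |∫ x in x₀..a, L x| ≤ ML * |a - x₀| := this
        _ = ML * δ := by rw [ha]; congr 1; rw [abs_of_pos (by linarith)]; ring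
    have hend2 : |∫ x in b..(x₀ + 2*π), L x| ≤ ML * δ := by
      have hbd : ∀ t ∈ Set.uIoc b (x₀ + 2*π), ‖L t‖ ≤ ML := by
        intro t ht
        rw [Set.uIoc_of_le hbI.2.le] at ht
        exact hML t ⟨by linarith [ht.1, hbI.1], ht.2⟩
      have := intervalIntegral.norm_integral_le_of_norm_le_const hbd
      rw [Real.norm_eq_abs] at this
      calc |∫ x in b..(x₀ + 2*π), L x| ≤ ML * |x₀ + 2*π - b| := this
        _ = ML * δ := by rw [hb]; congr 1; rw [abs_of_pos (by linarith)]; ring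
    have hSbound : ∀ y ∈ Ioo x₀ (x₀ + 2*π), |c y| ≤ Mc * δ →
        mf * δ / 2 ≤ g y → mf * δ / 2 ≤ π - g y → |S y| ≤ 2*Mc^2/mf * δ := by
      intro y hy hcy hg1 hg2
      have hgy := hgmem y hy
      have hcot := abs_cot_le hgy.1 hgy.2
      have hg1' : 0 < mf * δ / 2 := by positivity
      have hk1 : 1 / g y ≤ 2 / (mf * δ) := by
        have := one_div_le_one_div_of_le hg1' hg1
        calc 1 / g y ≤ 1 / (mf * δ / 2) := this
          _ = 2 / (mf * δ) := by rw [div_div_eq_mul_div]; ring_nf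
      have hk2 : 1 / (π - g y) ≤ 2 / (mf * δ) := by
        have := one_div_le_one_div_of_le hg1' hg2
        calc 1 / (π - g y) ≤ 1 / (mf * δ / 2) := this
          _ = 2 / (mf * δ) := by rw [div_div_eq_mul_div]; ring_nf
      have hSabs : |S y| = c y ^ 2 * |Real.cos (g y) / Real.sin (g y)| / 2 := by
        rw [hS]
        rw [abs_div, abs_mul, abs_of_nonneg (sq_nonneg (c y))]
        norm_num
      have hc2 : c y ^ 2 ≤ (Mc * δ) ^ 2 := by
        rw [← sq_abs]
        exact pow_le_pow_left₀ (abs_nonneg _) hcy 2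
      have hcotpos : 0 ≤ |Real.cos (g y) / Real.sin (g y)| := abs_nonneg _
      have step1 : |S y| ≤ (Mc * δ) ^ 2 * (1 / g y + 1 / (π - g y)) / 2 := by
        rw [hSabs]
        have h1 : c y ^ 2 * |Real.cos (g y) / Real.sin (g y)| ≤
            (Mc * δ) ^ 2 * (1 / g y + 1 / (π - g y)) := by
          apply mul_le_mul hc2 hcot hcotpos (by positivity)
        linarith
      have step2 : (Mc * δ) ^ 2 * (1 / g y + 1 / (π - g y)) / 2 ≤
          (Mc * δ) ^ 2 * (2 / (mf * δ) + 2 / (mf * δ)) / 2 := by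
        have hkk : 1 / g y + 1 / (π - g y) ≤ 2 / (mf * δ) + 2 / (mf * δ) := by linarith
        have := mul_le_mul_of_nonneg_left hkk (sq_nonneg (Mc * δ))
        linarith
      have step3 : (Mc * δ) ^ 2 * (2 / (mf * δ) + 2 / (mf * δ)) / 2 = 2*Mc^2/mf * δ := by
        field_simp
        ring
      rw [step3] at step2
      linarith
    have hamem : a ∈ Icc x₀ (x₀ + 2*π) := ⟨haI.1.le, haI.2.le⟩
    have hbmem : b ∈ Icc x₀ (x₀ + 2*π) := ⟨hbI.1.le, hbI.2.le⟩
    have hmfdd : mf * δ ≤ mf * (2*π - δ) := by nlinarith [hmfpos.le]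
    have hSa : |S a| ≤ 2*Mc^2/mf * δ := by
      apply hSbound a haI
      · have := hcgrow1 a hamem
        calc |c a| ≤ Mc * (a - x₀) := this
          _ = Mc * δ := by rw [ha]; ring
      · have := hfgrow1 a hamem
        have ha' : a - x₀ = δ := by rw [ha]; ring
        rw [ha'] at this
        simp only [hg]
        linarith
      · have := hfgrow2 a hamem
        have ha' : x₀ + 2*π - a = 2*π - δ := by rw [ha]; ring
        rw [ha'] at this
        simp only [hg]
        linarith
    have hSb : |S b| ≤ 2*Mc^2/mf * δ := by
      apply hSbound b hbI
      · have := hcgrow2 b hbmem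
        calc |c b| ≤ Mc * (x₀ + 2*π - b) := this
          _ = Mc * δ := by rw [hb]; ring
      · have := hfgrow1 b hbmem
        have hb' : b - x₀ = 2*π - δ := by rw [hb]; ring
        rw [hb'] at this
        simp only [hg]
        linarith
      · have := hfgrow2 b hbmem
        have hb' : x₀ + 2*π - b = δ := by rw [hb]; ring
        rw [hb'] at this
        simp only [hg]
        linarith
    have e1 := abs_le.mp hend1
    have e2 := abs_le.mp hend2
    have s1 := abs_le.mp hSa
    have s2 := abs_le.mp hSb
    rw [hsplit]
    linarith [hLab, e1.1, e2.1, s1.1, s1.2, s2.1, s2.2]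
  -- conclude
  by_contra hneg
  push_neg at hneg
  set A := ∫ x in x₀..(x₀ + 2*π), L x with hAdef
  set CC := 2*(2*Mc^2/mf) + 2*ML with hCCdef
  have hCC0 : 0 ≤ CC := by
    have h1 : 0 ≤ 2*Mc^2/mf := div_nonneg (by positivity) hmfpos.le
    rw [hCCdef]; linarith
  set B := -A/(CC+1) with hBdef
  have hB0 : 0 < B := div_pos (by linarith) (by linarith)
  set δ := min (π/2) B with hδdef
  have hδ0 : 0 < δ := lt_min (by linarith) hB0
  have hδπ : δ < π := lt_of_le_of_lt (min_le_left _ _) (by linarith)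
  have h := hstep δ hδ0 hδπ
  have hδle : δ ≤ B := min_le_right _ _
  have h2 : CC*δ ≤ CC*B := mul_le_mul_of_nonneg_left hδle hCC0
  have h4 : B*(CC+1) = -A := by
    rw [hBdef]; field_simp
  have h5 : CC*B + B = -A := by linear_combination h4
  linarith [h, h2, h5, hB0]

lemma weighted_wirtinger (f c : ℝ → ℝ) (hf : ContDiff ℝ (⊤ : ℕ∞) f) (hf' : ∀ x, 0 < deriv f x)
    (hper : ∀ x, f (x + 2*π) = f x + 2*π)
    (hc : ContDiff ℝ ((⊤:ℕ∞) : WithTop ℕ∞) c) (hanti : ∀ x, c (x + 2*π) = - c x) :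
    ∫ x in (0:ℝ)..(2*π), (deriv f x / 4) * c x ^ 2 ≤
      ∫ x in (0:ℝ)..(2*π), (deriv c x) ^ 2 / deriv f x := by
  have hπ : (0:ℝ) < π := Real.pi_pos
  have hfd : Differentiable ℝ f := hf.differentiable (by simp)
  have hfi : ContDiff ℝ ((⊤:ℕ∞) : WithTop ℕ∞) f := hf.of_le (by simp)
  have hf'c : Continuous (deriv f) := ((contDiff_infty_iff_deriv.mp hfi).2).continuous
  have hcd : Differentiable ℝ c := hc.differentiable (by simp)
  have hc'c : Continuous (deriv c) := ((contDiff_infty_iff_deriv.mp hc).2).continuous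
  have hmono : StrictMono f := strictMono_of_deriv_pos hf'
  have hfper' : ∀ x, deriv f (x + 2*π) = deriv f x := deriv_lift_periodic hper
  have hcper' : ∀ x, deriv c (x + 2*π) = - deriv c x := deriv_antiperiodic hanti
  set L : ℝ → ℝ := fun x => (deriv c x) ^ 2 / deriv f x - (deriv f x / 4) * c x ^ 2 with hL
  have hLcont : Continuous L := by
    apply Continuous.sub
    · exact (hc'c.pow 2).div hf'c (fun x => (hf' x).ne')
    · exact (hf'c.div_const 4).mul (hc.continuous.pow 2)
  have hLper : Function.Periodic L (2*π) := by
    intro x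
    simp only [hL, hfper' x, hcper' x, hanti x]
    ring
  -- find a zero of c
  obtain ⟨x₀, hx₀⟩ : ∃ x₀, c x₀ = 0 := by
    rcases lt_trichotomy (c 0) 0 with h | h | h
    · have h2 : 0 < c (0 + 2*π) := by rw [hanti]; linarith
      have sub := intermediate_value_Icc (by linarith : (0:ℝ) ≤ 0 + 2*π) hc.continuous.continuousOn
      obtain ⟨x₀, _, hx₀⟩ := sub ⟨h.le, h2.le⟩
      exact ⟨x₀, hx₀⟩
    · exact ⟨0, h⟩
    · have h2 : c (0 + 2*π) < 0 := by rw [hanti]; linarith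
      have sub := intermediate_value_Icc' (by linarith : (0:ℝ) ≤ 0 + 2*π) hc.continuous.continuousOn
      obtain ⟨x₀, _, hx₀⟩ := sub ⟨h2.le, h.le⟩
      exact ⟨x₀, hx₀⟩
  suffices hA : 0 ≤ ∫ x in x₀..(x₀ + 2*π), L x by
    have heq : ∫ x in x₀..(x₀ + 2*π), L x = ∫ x in (0:ℝ)..(2*π), L x := by
      have := hLper.intervalIntegral_add_eq x₀ 0
      simpa using this
    rw [heq] at hA
    have hsub : ∫ x in (0:ℝ)..(2*π), L x =
        (∫ x in (0:ℝ)..(2*π), (deriv c x) ^ 2 / deriv f x) -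
        ∫ x in (0:ℝ)..(2*π), (deriv f x / 4) * c x ^ 2 := by
      rw [hL]
      exact intervalIntegral.integral_sub
        (((hc'c.pow 2).div hf'c (fun x => (hf' x).ne')).intervalIntegrable _ _)
        (((hf'c.div_const 4).mul (hc.continuous.pow 2)).intervalIntegrable _ _)
    rw [hsub] at hA
    linarith
  exact core_nonneg f c hf hf' hper hc hanti x₀ hx₀

set_option maxHeartbeats 1000000 in
lemma key_ineq (f : ℝ → ℝ) (hf : ContDiff ℝ (⊤ : ℕ∞) f) (hf' : ∀ x, 0 < deriv f x)
    (hper : ∀ x, f (x + 2*π) = f x + 2*π) :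
    ∫ x in (0:ℝ)..(2*π), (deriv f x)^2 ≤
      2*π + ∫ x in (0:ℝ)..(2*π), (deriv (deriv f) x / deriv f x)^2 := by
  have hπ : (0:ℝ) < π := Real.pi_pos
  have hfi : ContDiff ℝ ((⊤:ℕ∞) : WithTop ℕ∞) f := hf.of_le (by simp)
  have hF : ContDiff ℝ ((⊤:ℕ∞) : WithTop ℕ∞) (deriv f) := (contDiff_infty_iff_deriv.mp hfi).2
  have hFc : Continuous (deriv f) := hF.continuous
  have hFd : Differentiable ℝ (deriv f) := hF.differentiable (by simp)
  have hF''c : Continuous (deriv (deriv f)) := (contDiff_infty_iff_deriv.mp hF).2.continuous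
  have hFper : ∀ x, deriv f (x + 2*π) = deriv f x := deriv_lift_periodic hper
  -- the test functions
  set c₁ : ℝ → ℝ := fun x => Real.cos (x/2) * Real.sqrt (deriv f x) with hc₁def
  set c₂ : ℝ → ℝ := fun x => Real.sin (x/2) * Real.sqrt (deriv f x) with hc₂def
  have hsqrtCD : ContDiff ℝ ((⊤:ℕ∞) : WithTop ℕ∞) (fun x => Real.sqrt (deriv f x)) := by
    rw [contDiff_iff_contDiffAt]
    intro x
    exact (hF.contDiffAt).sqrt (hf' x).ne'
  have hhalf : ContDiff ℝ ((⊤:ℕ∞) : WithTop ℕ∞) (fun x : ℝ => x / 2) :=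
    contDiff_id.div_const 2
  have hc₁ : ContDiff ℝ ((⊤:ℕ∞) : WithTop ℕ∞) c₁ := by
    rw [hc₁def]
    exact (Real.contDiff_cos.comp hhalf).mul hsqrtCD
  have hc₂ : ContDiff ℝ ((⊤:ℕ∞) : WithTop ℕ∞) c₂ := by
    rw [hc₂def]
    exact (Real.contDiff_sin.comp hhalf).mul hsqrtCD
  have harg : ∀ x : ℝ, (x + 2*π)/2 = x/2 + π := fun x => by ring
  have hanti₁ : ∀ x, c₁ (x + 2*π) = - c₁ x := by
    intro x
    simp only [hc₁def, harg x, Real.cos_add_pi, hFper x]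
    ring
  have hanti₂ : ∀ x, c₂ (x + 2*π) = - c₂ x := by
    intro x
    simp only [hc₂def, harg x, Real.sin_add_pi, hFper x]
    ring
  -- derivatives
  have hd₁ : ∀ x, HasDerivAt c₁
      (-Real.sin (x/2) * (1/2) * Real.sqrt (deriv f x)
        + Real.cos (x/2) * (1 / (2 * Real.sqrt (deriv f x)) * deriv (deriv f) x)) x := by
    intro x
    have hin : HasDerivAt (fun y : ℝ => y / 2) (1/2) x := (hasDerivAt_id x).div_const 2
    have hcos : HasDerivAt (fun y : ℝ => Real.cos (y/2)) (-Real.sin (x/2) * (1/2)) x := by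
      have h := (Real.hasDerivAt_cos (x/2)).comp x hin
      exact h
    have hsq : HasDerivAt (fun y => Real.sqrt (deriv f y))
        (1 / (2 * Real.sqrt (deriv f x)) * deriv (deriv f) x) x :=
      (Real.hasDerivAt_sqrt (hf' x).ne').comp x (hFd x).hasDerivAt
    exact hcos.mul hsq
  have hd₂ : ∀ x, HasDerivAt c₂
      (Real.cos (x/2) * (1/2) * Real.sqrt (deriv f x)
        + Real.sin (x/2) * (1 / (2 * Real.sqrt (deriv f x)) * deriv (deriv f) x)) x := by
    intro x
    have hin : HasDerivAt (fun y : ℝ => y / 2) (1/2) x := (hasDerivAt_id x).div_const 2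
    have hsin : HasDerivAt (fun y : ℝ => Real.sin (y/2)) (Real.cos (x/2) * (1/2)) x := by
      have h := (Real.hasDerivAt_sin (x/2)).comp x hin
      exact h
    have hsq : HasDerivAt (fun y => Real.sqrt (deriv f y))
        (1 / (2 * Real.sqrt (deriv f x)) * deriv (deriv f) x) x :=
      (Real.hasDerivAt_sqrt (hf' x).ne').comp x (hFd x).hasDerivAt
    exact hsin.mul hsq
  -- pointwise identities
  have hsum1 : ∀ x, (deriv c₁ x)^2 / deriv f x + (deriv c₂ x)^2 / deriv f x
      = 1/4 + (deriv (deriv f) x / deriv f x)^2 / 4 := by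
    intro x
    rw [(hd₁ x).deriv, (hd₂ x).deriv]
    have hq : Real.sqrt (deriv f x) ^ 2 = deriv f x := Real.sq_sqrt (hf' x).le
    have hqpos : 0 < Real.sqrt (deriv f x) := Real.sqrt_pos.mpr (hf' x)
    have pyth := Real.sin_sq_add_cos_sq (x/2)
    have key : ∀ (s d a b : ℝ), 0 < s → a^2 + b^2 = 1 →
        (-a*(1/2)*s + b*(1/(2*s)*d))^2/(s^2) + (b*(1/2)*s + a*(1/(2*s)*d))^2/(s^2)
          = 1/4 + (d/s^2)^2/4 := by
      intro s d a b hs hab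
      have hs' : s ≠ 0 := hs.ne'
      calc _ = (a^2+b^2) * (1/4 + (d/s^2)^2/4) := by field_simp; ring
        _ = _ := by rw [hab, one_mul]
    have := key (Real.sqrt (deriv f x)) (deriv (deriv f) x) (Real.sin (x/2)) (Real.cos (x/2)) hqpos pyth
    rw [hq] at this
    exact this
  have hsum2 : ∀ x, (deriv f x / 4) * c₁ x ^ 2 + (deriv f x / 4) * c₂ x ^ 2
      = (deriv f x)^2 / 4 := by
    intro x
    simp only [hc₁def, hc₂def]
    have hq : Real.sqrt (deriv f x) ^ 2 = deriv f x := Real.sq_sqrt (hf' x).le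
    have pyth := Real.sin_sq_add_cos_sq (x/2)
    linear_combination (deriv f x / 4 * Real.sqrt (deriv f x)^2) * pyth
      + (deriv f x / 4) * hq
  -- continuity facts and integrability
  have hc₁c : Continuous c₁ := hc₁.continuous
  have hc₂c : Continuous c₂ := hc₂.continuous
  have hd₁c : Continuous (deriv c₁) := (contDiff_infty_iff_deriv.mp hc₁).2.continuous
  have hd₂c : Continuous (deriv c₂) := (contDiff_infty_iff_deriv.mp hc₂).2.continuous
  have hFne : ∀ x, deriv f x ≠ 0 := fun x => (hf' x).ne'
  have i1 : IntervalIntegrable (fun x => (deriv f x / 4) * c₁ x ^ 2) volume 0 (2*π) :=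
    ((hFc.div_const 4).mul (hc₁c.pow 2)).intervalIntegrable _ _
  have i2 : IntervalIntegrable (fun x => (deriv f x / 4) * c₂ x ^ 2) volume 0 (2*π) :=
    ((hFc.div_const 4).mul (hc₂c.pow 2)).intervalIntegrable _ _
  have i3 : IntervalIntegrable (fun x => (deriv c₁ x)^2 / deriv f x) volume 0 (2*π) :=
    ((hd₁c.pow 2).div hFc hFne).intervalIntegrable _ _
  have i4 : IntervalIntegrable (fun x => (deriv c₂ x)^2 / deriv f x) volume 0 (2*π) :=
    ((hd₂c.pow 2).div hFc hFne).intervalIntegrable _ _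
  have w1 := weighted_wirtinger f c₁ hf hf' hper hc₁ hanti₁
  have w2 := weighted_wirtinger f c₂ hf hf' hper hc₂ hanti₂
  have hLsum : (∫ x in (0:ℝ)..(2*π), (deriv f x / 4) * c₁ x ^ 2)
      + (∫ x in (0:ℝ)..(2*π), (deriv f x / 4) * c₂ x ^ 2)
      = ∫ x in (0:ℝ)..(2*π), (deriv f x)^2/4 := by
    rw [← intervalIntegral.integral_add i1 i2]
    apply intervalIntegral.integral_congr
    intro x _
    exact hsum2 x
  have hRsum : (∫ x in (0:ℝ)..(2*π), (deriv c₁ x)^2 / deriv f x)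
      + (∫ x in (0:ℝ)..(2*π), (deriv c₂ x)^2 / deriv f x)
      = ∫ x in (0:ℝ)..(2*π), (1/4 + (deriv (deriv f) x / deriv f x)^2/4) := by
    rw [← intervalIntegral.integral_add i3 i4]
    apply intervalIntegral.integral_congr
    intro x _
    exact hsum1 x
  have hRval : (∫ x in (0:ℝ)..(2*π), (1/4 + (deriv (deriv f) x / deriv f x)^2/4))
      = π/2 + (∫ x in (0:ℝ)..(2*π), (deriv (deriv f) x / deriv f x)^2)/4 := by
    have ia : IntervalIntegrable (fun _ : ℝ => (1:ℝ)/4) volume 0 (2*π) := intervalIntegrable_const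
    have ib : IntervalIntegrable (fun x => (deriv (deriv f) x / deriv f x)^2/4) volume 0 (2*π) :=
      ((((hF''c.div hFc hFne).pow 2)).div_const 4).intervalIntegrable _ _
    rw [intervalIntegral.integral_add ia ib, intervalIntegral.integral_const,
      intervalIntegral.integral_div]
    rw [smul_eq_mul]
    ring
  have hLval : (∫ x in (0:ℝ)..(2*π), (deriv f x)^2/4)
      = (∫ x in (0:ℝ)..(2*π), (deriv f x)^2)/4 := intervalIntegral.integral_div 4 _
  linarith [w1, w2]

lemma int_deriv_eq (f : ℝ → ℝ) (hf : ContDiff ℝ (⊤ : ℕ∞) f)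
    (hper : ∀ x, f (x + 2*π) = f x + 2*π) :
    ∫ x in (0:ℝ)..(2*π), deriv f x = 2*π := by
  have hfi : ContDiff ℝ ((⊤:ℕ∞) : WithTop ℕ∞) f := hf.of_le (by simp)
  have hFc : Continuous (deriv f) := (contDiff_infty_iff_deriv.mp hfi).2.continuous
  have hfd : Differentiable ℝ f := hf.differentiable (by simp)
  rw [intervalIntegral.integral_deriv_eq_sub (fun x _ => hfd x) (hFc.intervalIntegrable _ _)]
  have h0 := hper 0
  rw [zero_add] at h0
  rw [h0]
  ring

lemma int_sq_ge (f : ℝ → ℝ) (hf : ContDiff ℝ (⊤ : ℕ∞) f)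
    (hper : ∀ x, f (x + 2*π) = f x + 2*π) :
    2*π ≤ ∫ x in (0:ℝ)..(2*π), (deriv f x)^2 := by
  have hπ : (0:ℝ) < π := Real.pi_pos
  have hfi : ContDiff ℝ ((⊤:ℕ∞) : WithTop ℕ∞) f := hf.of_le (by simp)
  have hFc : Continuous (deriv f) := (contDiff_infty_iff_deriv.mp hfi).2.continuous
  have h0 : 0 ≤ ∫ x in (0:ℝ)..(2*π), (deriv f x - 1)^2 :=
    intervalIntegral.integral_nonneg (by linarith) (fun u _ => sq_nonneg _)
  have heq : (fun x => (deriv f x - 1)^2) = fun x => (deriv f x)^2 - (2*deriv f x - 1) := by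
    funext x; ring
  rw [heq] at h0
  have i1 : IntervalIntegrable (fun x => (deriv f x)^2) volume 0 (2*π) :=
    (hFc.pow 2).intervalIntegrable _ _
  have i2 : IntervalIntegrable (fun x => 2*deriv f x - 1) volume 0 (2*π) :=
    ((continuous_const.mul hFc).sub continuous_const).intervalIntegrable _ _
  rw [intervalIntegral.integral_sub i1 i2] at h0
  have i3 : IntervalIntegrable (fun x => 2*deriv f x) volume 0 (2*π) :=
    (continuous_const.mul hFc).intervalIntegrable _ _
  have h2 : ∫ x in (0:ℝ)..(2*π), (2*deriv f x - 1)
      = (∫ x in (0:ℝ)..(2*π), 2*deriv f x) - ∫ x in (0:ℝ)..(2*π), (1:ℝ) := by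
    exact intervalIntegral.integral_sub i3 intervalIntegrable_const
  rw [h2, intervalIntegral.integral_const_mul, int_deriv_eq f hf hper,
    intervalIntegral.integral_const, smul_eq_mul] at h0
  linarith

/-- For a constant mass-aspect function `μ ≡ m` with `m ≥ −1`, one has
`H[m; f] ≥ m` for every circle-diffeomorphism lift `f`, with equality for the
identity map; hence the infimum of `H[m; ·]` over all circle-diffeomorphism
lifts equals `m` and is attained. -/
theorem renormEnergy_const_isLeast (m : ℝ) (hm : -1 ≤ m) :
    (∀ f : ℝ → ℝ, IsCircleDiffeoLift f → m ≤ renormEnergy (fun _ => m) f) ∧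
      IsCircleDiffeoLift (fun x : ℝ => x) ∧
      renormEnergy (fun _ => m) (fun x : ℝ => x) = m ∧
      IsLeast {E : ℝ | ∃ f : ℝ → ℝ, IsCircleDiffeoLift f ∧
        E = renormEnergy (fun _ => m) f} m := by
  have hπ : (0:ℝ) < π := Real.pi_pos
  have hmain : ∀ f : ℝ → ℝ, IsCircleDiffeoLift f → m ≤ renormEnergy (fun _ => m) f := by
    rintro f ⟨hsm, hpos, hper⟩
    have hfi : ContDiff ℝ ((⊤:ℕ∞) : WithTop ℕ∞) f := hsm.of_le (by simp)
    have hFc : Continuous (deriv f) := (contDiff_infty_iff_deriv.mp hfi).2.continuous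
    have hF''c : Continuous (deriv (deriv f)) :=
      (contDiff_infty_iff_deriv.mp ((contDiff_infty_iff_deriv.mp hfi).2)).2.continuous
    have hFne : ∀ x, deriv f x ≠ 0 := fun x => (hpos x).ne'
    set I := ∫ x in (0:ℝ)..(2*π), (deriv f x)^2 with hI
    set J := ∫ x in (0:ℝ)..(2*π), (deriv (deriv f) x / deriv f x)^2 with hJ
    have hJ0 : 0 ≤ J :=
      intervalIntegral.integral_nonneg (by linarith) (fun u _ => sq_nonneg _)
    have hkey : I ≤ 2*π + J := key_ineq f hsm hpos hper
    have hsq : 2*π ≤ I := int_sq_ge f hsm hper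
    have hsplit : (∫ x in (0:ℝ)..(2*π),
        ((fun _ : ℝ => m) (f x) * (deriv f x) ^ 2 + (deriv (deriv f) x / deriv f x) ^ 2))
        = m * I + J := by
      have i1 : IntervalIntegrable (fun x => m * (deriv f x)^2) volume 0 (2*π) :=
        (continuous_const.mul (hFc.pow 2)).intervalIntegrable _ _
      have i2 : IntervalIntegrable (fun x => (deriv (deriv f) x / deriv f x)^2) volume 0 (2*π) :=
        (((hF''c.div hFc hFne)).pow 2).intervalIntegrable _ _
      simp only []
      rw [intervalIntegral.integral_add i1 i2, intervalIntegral.integral_const_mul]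
    have hlow : 2*π*m ≤ m * I + J := by
      rcases le_or_gt 0 m with hm0 | hm0
      · have h1 : m * (2*π) ≤ m * I := mul_le_mul_of_nonneg_left hsq hm0
        linarith
      · have h1 : m * (2*π + J) ≤ m * I := mul_le_mul_of_nonpos_left hkey hm0.le
        have h2 : m * (2*π + J) = 2*π*m + m*J := by ring
        have h3 : 0 ≤ (1+m) * J := mul_nonneg (by linarith) hJ0
        have h4 : (1+m)*J = J + m*J := by ring
        linarith
    rw [renormEnergy, hsplit]
    calc m = (1/(2*π)) * (2*π*m) := by field_simp
      _ ≤ (1/(2*π)) * (m * I + J) := by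
          apply mul_le_mul_of_nonneg_left hlow (by positivity)
  have hid : IsCircleDiffeoLift (fun x : ℝ => x) := by
    refine ⟨contDiff_id, ?_, fun x => rfl⟩
    intro x
    simp
  have hval : renormEnergy (fun _ => m) (fun x : ℝ => x) = m := by
    rw [renormEnergy]
    have h1 : deriv (fun x : ℝ => x) = fun _ => (1:ℝ) := by
      funext x; simp
    have h2 : deriv (deriv (fun x : ℝ => x)) = fun _ => (0:ℝ) := by
      rw [h1]; funext x; simp
    simp only [h1, h2]
    norm_num
    field_simp
  refine ⟨hmain, hid, hval, ⟨⟨(fun x : ℝ => x), hid, hval.symm⟩, ?_⟩⟩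
  rintro E ⟨f, hf, rfl⟩
  exact hmain f hf
end

section
/- Let μ : ℝ → ℝ be continuous, 2π-periodic, and satisfy μ(x) < −1 for all x (equivalently, max μ < −1). Then for every real number C there exists a circle-diffeomorphism lift f with H[μ; f] < C; that is, the renormalized energy functional f ↦ H[μ; f] is unbounded from below. -/
open Real

namespace RenormAux

noncomputable section

def Dk (k t : ℝ) : ℝ := 1 + k ^ 2 - (k ^ 2 - 1) * Real.cos t

def Wk (k t : ℝ) : ℝ := (k - 1) * Real.sin t / ((k + 1) - (k - 1) * Real.cos t)

def gk (k t : ℝ) : ℝ := 2 * k / Dk k t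

def gk' (k t : ℝ) : ℝ := -(2 * k * (k ^ 2 - 1) * Real.sin t) / (Dk k t) ^ 2

def fk (k t : ℝ) : ℝ := t + 2 * Real.arctan (Wk k t)

def Phi (k m t : ℝ) : ℝ :=
  (1 - m) * (1 + k ^ 2) * (t / (2 * k) + Real.arctan (Wk k t) / k)
    - (m + 1) * (k ^ 2 - 1) * (Real.sin t / Dk k t) - t

variable {k : ℝ}

lemma Dk_pos (hk : 1 ≤ k) (t : ℝ) : 0 < Dk k t := by
  have h1 := Real.cos_le_one t
  have hk2 : 1 ≤ k ^ 2 := by nlinarith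
  have h3 : 0 ≤ (k ^ 2 - 1) * (1 - Real.cos t) :=
    mul_nonneg (by linarith) (by linarith)
  unfold Dk; nlinarith

lemma dk_pos (hk : 1 ≤ k) (t : ℝ) : 0 < (k + 1) - (k - 1) * Real.cos t := by
  have h1 := Real.cos_le_one t
  have h3 : 0 ≤ (k - 1) * (1 - Real.cos t) :=
    mul_nonneg (by linarith) (by linarith)
  nlinarith

lemma hasDerivAt_Wk (hk : 1 ≤ k) (t : ℝ) :
    HasDerivAt (Wk k)
      ((k - 1) * ((k + 1) * Real.cos t - (k - 1)) / ((k + 1) - (k - 1) * Real.cos t) ^ 2) t := by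
  have hd := (dk_pos hk t).ne'
  have hs := Real.sin_sq_add_cos_sq t
  have h1 : HasDerivAt (fun t => (k - 1) * Real.sin t) ((k - 1) * Real.cos t) t :=
    (Real.hasDerivAt_sin t).const_mul _
  have h2 : HasDerivAt (fun t => (k + 1) - (k - 1) * Real.cos t)
      ((k - 1) * Real.sin t) t := by
    simpa using (((Real.hasDerivAt_cos t).const_mul (k - 1)).const_sub (k + 1))
  have := h1.div h2 hd
  convert this using 1
  · rfl
  · rfl
  · rfl
  field_simp
  linear_combination ((k - 1) ^ 2) * hs

lemma hasDerivAt_arctan_Wk (hk : 1 ≤ k) (t : ℝ) :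
    HasDerivAt (fun t => Real.arctan (Wk k t))
      ((k - 1) * ((k + 1) * Real.cos t - (k - 1)) / (2 * Dk k t)) t := by
  have hd := (dk_pos hk t).ne'
  have hD := (Dk_pos hk t).ne'
  have hs := Real.sin_sq_add_cos_sq t
  have h := (Real.hasDerivAt_arctan (Wk k t)).comp t (hasDerivAt_Wk hk t)
  convert h using 1
  · rfl
  · rfl
  · rfl
  have hsq : ((k + 1) - (k - 1) * Real.cos t) ^ 2 + ((k - 1) * Real.sin t) ^ 2
      = 2 * Dk k t := by
    unfold Dk; nlinarith
  have h1W : 1 + Wk k t ^ 2 = 2 * Dk k t / ((k + 1) - (k - 1) * Real.cos t) ^ 2 := by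
    rw [← hsq]
    unfold Wk
    field_simp
  rw [h1W]
  field_simp

lemma hasDerivAt_fk (hk : 1 ≤ k) (t : ℝ) : HasDerivAt (fk k) (gk k t) t := by
  have hD : (1 + k ^ 2 - (k ^ 2 - 1) * Real.cos t) ≠ 0 := (Dk_pos hk t).ne'
  have h := (hasDerivAt_id t).add ((hasDerivAt_arctan_Wk hk t).const_mul 2)
  convert h using 1
  · rfl
  · rfl
  · rfl
  unfold gk Dk
  field_simp
  ring

lemma hasDerivAt_gk (hk : 1 ≤ k) (t : ℝ) : HasDerivAt (gk k) (gk' k t) t := by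
  have hD : (1 + k ^ 2 - (k ^ 2 - 1) * Real.cos t) ≠ 0 := (Dk_pos hk t).ne'
  have hDd : HasDerivAt (fun t => Dk k t) ((k ^ 2 - 1) * Real.sin t) t := by
    unfold Dk
    simpa using (((Real.hasDerivAt_cos t).const_mul (k ^ 2 - 1)).const_sub (1 + k ^ 2))
  have h := (hasDerivAt_const t (2 * k)).div hDd ((Dk_pos hk t).ne')
  convert h using 1
  · rfl
  · rfl
  · rfl
  unfold gk'
  ring

lemma continuous_Dk : Continuous (Dk k) := by
  unfold Dk; continuity

lemma continuous_gk (hk : 1 ≤ k) : Continuous (gk k) :=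
  continuous_const.div continuous_Dk fun t => (Dk_pos hk t).ne'

lemma continuous_gk' (hk : 1 ≤ k) : Continuous (gk' k) := by
  apply Continuous.div
  · continuity
  · exact continuous_Dk.pow 2
  · exact fun t => pow_ne_zero _ (Dk_pos hk t).ne'

lemma gk_pos (hk : 1 ≤ k) (t : ℝ) : 0 < gk k t :=
  div_pos (by linarith) (Dk_pos hk t)

lemma contDiff_fk (hk : 1 ≤ k) : ContDiff ℝ (⊤ : ℕ∞) (fk k) := by
  have hW : ContDiff ℝ (⊤ : ℕ∞) (Wk k) := by
    apply ContDiff.div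
    · exact contDiff_const.mul Real.contDiff_sin
    · exact contDiff_const.sub (contDiff_const.mul Real.contDiff_cos)
    · exact fun t => (dk_pos hk t).ne'
  exact contDiff_id.add (contDiff_const.mul (Real.contDiff_arctan.comp hW))

lemma continuous_fk (hk : 1 ≤ k) : Continuous (fk k) :=
  (contDiff_fk hk).continuous

lemma fk_periodic (hk : 1 ≤ k) (x : ℝ) : fk k (x + 2 * π) = fk k x + 2 * π := by
  unfold fk Wk
  rw [Real.sin_add_two_pi, Real.cos_add_two_pi]
  ring

lemma gk_div (hk : 1 ≤ k) (t : ℝ) :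
    gk' k t / gk k t = -((k ^ 2 - 1) * Real.sin t) / Dk k t := by
  have hD : (Dk k t) ≠ 0 := (Dk_pos hk t).ne'
  have hk0 : k ≠ 0 := by positivity
  unfold gk' gk
  field_simp

lemma aux_alg (hk : 1 ≤ k) (m t : ℝ) :
    -m * (gk k t) ^ 2 + (gk' k t / gk k t) ^ 2
      = (-(4 * k ^ 2 * (m + 1))) / (Dk k t) ^ 2 + 2 * (1 + k ^ 2) / Dk k t - 1 := by
  have hD : Dk k t ≠ 0 := (Dk_pos hk t).ne'
  have hs := Real.sin_sq_add_cos_sq t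
  have hnum : (-((k ^ 2 - 1) * Real.sin t)) ^ 2
      = (k ^ 2 - 1) ^ 2 - ((1 + k ^ 2) - Dk k t) ^ 2 := by
    unfold Dk
    linear_combination ((k ^ 2 - 1) ^ 2) * hs
  rw [gk_div hk t, div_pow, hnum]
  unfold gk
  rw [div_pow]
  field_simp
  ring

lemma hasDerivAt_Phi (hk : 1 ≤ k) (m t : ℝ) :
    HasDerivAt (Phi k m) (-m * (gk k t) ^ 2 + (gk' k t / gk k t) ^ 2) t := by
  have hD : (1 + k ^ 2 - (k ^ 2 - 1) * Real.cos t) ≠ 0 := (Dk_pos hk t).ne'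
  have hk0 : k ≠ 0 := by positivity
  have hDd : HasDerivAt (fun t => Dk k t) ((k ^ 2 - 1) * Real.sin t) t := by
    unfold Dk
    simpa using (((Real.hasDerivAt_cos t).const_mul (k ^ 2 - 1)).const_sub (1 + k ^ 2))
  have hs := Real.sin_sq_add_cos_sq t
  have hsinD : HasDerivAt (fun t => Real.sin t / Dk k t)
      (((1 + k ^ 2) * Real.cos t - (k ^ 2 - 1)) / (Dk k t) ^ 2) t := by
    have h := (Real.hasDerivAt_sin t).div hDd ((Dk_pos hk t).ne')
    convert h using 1
    · rfl
    · rfl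
    · rfl
    unfold Dk
    congr 1
    linear_combination ((k ^ 2 - 1)) * hs
  have h1 : HasDerivAt (fun t => t / (2 * k) + Real.arctan (Wk k t) / k)
      (1 / (2 * k) + ((k - 1) * ((k + 1) * Real.cos t - (k - 1)) / (2 * Dk k t)) / k) t :=
    ((hasDerivAt_id t).div_const (2 * k)).add ((hasDerivAt_arctan_Wk hk t).div_const k)
  have h := (((h1.const_mul ((1 - m) * (1 + k ^ 2))).sub
      (hsinD.const_mul ((m + 1) * (k ^ 2 - 1)))).sub (hasDerivAt_id t))
  have h2 : HasDerivAt (Phi k m)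
      ((1 - m) * (1 + k ^ 2) *
        (1 / (2 * k) + ((k - 1) * ((k + 1) * Real.cos t - (k - 1)) / (2 * Dk k t)) / k)
      - (m + 1) * (k ^ 2 - 1) * (((1 + k ^ 2) * Real.cos t - (k ^ 2 - 1)) / (Dk k t) ^ 2)
      - 1) t := by
    unfold Phi
    exact h
  have heq : (-(4 * k ^ 2 * (m + 1))) / (Dk k t) ^ 2 + 2 * (1 + k ^ 2) / Dk k t - 1
      = (1 - m) * (1 + k ^ 2) *
        (1 / (2 * k) + ((k - 1) * ((k + 1) * Real.cos t - (k - 1)) / (2 * Dk k t)) / k)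
      - (m + 1) * (k ^ 2 - 1) * (((1 + k ^ 2) * Real.cos t - (k ^ 2 - 1)) / (Dk k t) ^ 2)
      - 1 := by
    unfold Dk
    field_simp
    ring
  rw [aux_alg hk m t, heq]
  exact h2

lemma key_integral (hk : 1 ≤ k) (m : ℝ) :
    ∫ t in (0:ℝ)..(2 * π), (-m * (gk k t) ^ 2 + (gk' k t / gk k t) ^ 2)
      = (1 - m) * (1 + k ^ 2) * π / k - 2 * π := by
  have hk0 : k ≠ 0 := by positivity
  have hcont : Continuous fun t => -m * (gk k t) ^ 2 + (gk' k t / gk k t) ^ 2 := by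
    apply Continuous.add
    · exact continuous_const.mul ((continuous_gk hk).pow 2)
    · exact (((continuous_gk' hk).div (continuous_gk hk)
        fun t => (gk_pos hk t).ne') |>.pow 2)
  rw [intervalIntegral.integral_eq_sub_of_hasDerivAt
      (fun t _ => hasDerivAt_Phi hk m t) (hcont.intervalIntegrable _ _)]
  unfold Phi Wk Dk
  rw [Real.sin_two_pi, Real.cos_two_pi]
  simp
  field_simp

end

end RenormAux

open RenormAux

/-- If `μ < −1` everywhere then the renormalized energy functional
`f ↦ H[μ; f]` is unbounded from below. -/
theorem renormEnergy_unbounded_below (μ : ℝ → ℝ) (hc : Continuous μ)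
    (hp : Function.Periodic μ (2 * π)) (hneg : ∀ x, μ x < -1) (C : ℝ) :
    ∃ f : ℝ → ℝ, IsCircleDiffeoLift f ∧ renormEnergy μ f < C := by
  have hπ : (0:ℝ) < π := Real.pi_pos
  have h2π : (0:ℝ) < 2 * π := by linarith
  obtain ⟨x₀, hx₀mem, hx₀⟩ := isCompact_Icc.exists_isMaxOn
    (Set.nonempty_Icc.2 h2π.le) (hc.continuousOn (s := Set.Icc 0 (2 * π)))
  set m : ℝ := -μ x₀ with hm_def
  have hm1 : 1 < m := by rw [hm_def]; linarith [hneg x₀]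
  have hbound : ∀ y, μ y ≤ -m := by
    intro y
    obtain ⟨z, hz, hzy⟩ := hp.exists_mem_Ico₀ h2π y
    rw [hzy, hm_def, neg_neg]
    exact hx₀ (Set.mem_Icc.2 ⟨hz.1, hz.2.le⟩)
  have hm0 : (0:ℝ) < m - 1 := by linarith
  set k : ℝ := 2 + 2 * (|C| + 1) / (m - 1) with hk_def
  have hdiv0 : 0 ≤ 2 * (|C| + 1) / (m - 1) := div_nonneg (by positivity) hm0.le
  have hk : 1 ≤ k := by rw [hk_def]; linarith
  have hk0 : (0:ℝ) < k := by linarith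
  refine ⟨fk k, ⟨contDiff_fk hk, ?_, fk_periodic hk⟩, ?_⟩
  · intro x
    rw [(hasDerivAt_fk hk x).deriv]
    exact gk_pos hk x
  · have hderiv1 : deriv (fk k) = gk k := funext fun x => (hasDerivAt_fk hk x).deriv
    have hderiv2 : deriv (deriv (fk k)) = gk' k := by
      rw [hderiv1]; exact funext fun x => (hasDerivAt_gk hk x).deriv
    rw [renormEnergy, hderiv2, hderiv1]
    have hcont1 : Continuous fun x => μ (fk k x) * (gk k x) ^ 2 + (gk' k x / gk k x) ^ 2 := by
      apply Continuous.add
      · exact (hc.comp (continuous_fk hk)).mul ((continuous_gk hk).pow 2)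
      · exact (((continuous_gk' hk).div (continuous_gk hk)
          fun t => (gk_pos hk t).ne') |>.pow 2)
    have hcont2 : Continuous fun x => -m * (gk k x) ^ 2 + (gk' k x / gk k x) ^ 2 := by
      apply Continuous.add
      · exact continuous_const.mul ((continuous_gk hk).pow 2)
      · exact (((continuous_gk' hk).div (continuous_gk hk)
          fun t => (gk_pos hk t).ne') |>.pow 2)
    have hmono : (∫ x in (0:ℝ)..(2 * π),
          (μ (fk k x) * (gk k x) ^ 2 + (gk' k x / gk k x) ^ 2))
        ≤ ∫ x in (0:ℝ)..(2 * π), (-m * (gk k x) ^ 2 + (gk' k x / gk k x) ^ 2) := by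
      apply intervalIntegral.integral_mono_on h2π.le
        (hcont1.intervalIntegrable _ _) (hcont2.intervalIntegrable _ _)
      intro x _
      have h1 : μ (fk k x) * (gk k x) ^ 2 ≤ -m * (gk k x) ^ 2 :=
        mul_le_mul_of_nonneg_right (hbound _) (sq_nonneg _)
      exact add_le_add_left h1 _
    rw [key_integral hk m] at hmono
    have hE : (1 / (2 * π)) * ((1 - m) * (1 + k ^ 2) * π / k - 2 * π) < C := by
      have hmk : (m - 1) * k = 2 * (m - 1) + 2 * (|C| + 1) := by
        rw [hk_def]; field_simp
      have habs : -|C| ≤ C := neg_abs_le C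
      rw [show (1 / (2 * π)) * ((1 - m) * (1 + k ^ 2) * π / k - 2 * π)
          = (1 - m) * (1 + k ^ 2) / (2 * k) - 1 by field_simp]
      rw [sub_lt_iff_lt_add, div_lt_iff₀ (by linarith : (0:ℝ) < 2 * k)]
      nlinarith [sq_nonneg k, sq_nonneg (k - 1)]
    calc (1 / (2 * π)) * ∫ x in (0:ℝ)..(2 * π),
          (μ (fk k x) * (gk k x) ^ 2 + (gk' k x / gk k x) ^ 2)
        ≤ (1 / (2 * π)) * ((1 - m) * (1 + k ^ 2) * π / k - 2 * π) :=
          mul_le_mul_of_nonneg_left hmono (by positivity)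
      _ < C := hE
end

section
/- Let m, λ ∈ ℝ and let h : ℝ → ℝ be a twice continuously differentiable 2π-periodic function satisfying the normalization ∫₀^{2π} e^{h(x)} dx = 2π and the equation h''(x) = m·e^{2h(x)} + λ·e^{h(x)} for all x. Then either h is identically zero (in which case λ = −m), or there exist a positive integer n and a real number x₀ such that m = −n², λ > n², and e^{h(x)} = n² / ( λ + √(λ² − n⁴)·cos(n(x − x₀)) ) for all x. In particular, if m is not of the form −n² for any positive integer n, then the only such solution is h ≡ 0. -/
/-!
The energy `h'² - m e^{2h} - 2λ e^h` is conserved, and in terms of it `w = e^{-h}` solves the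
linear equation `w'' = λ + C w`. For `C ≥ 0` the only periodic solutions are constant, and the
normalization forces `h = 0`. For `C = -k² < 0` one gets `w = λ/k² + A cos (k (x - x₀))`:
periodicity makes `k = n` an integer, the normalization `∫ 1/w = 2π / √((λ/n²)² - A²)` fixes the
amplitude, and the energy at the maximum of `w` gives `m = -n²`.
-/

open Real

section

variable {E : Type*} [NormedAddCommGroup E] [NormedSpace ℝ E] {f f' : ℝ → E} {T : ℝ}

lemma eq_of_forall_hasDerivAt_zero (hf : ∀ x, HasDerivAt f 0 x) (x y : ℝ) : f x = f y :=
  is_const_of_deriv_eq_zero (fun z => (hf z).differentiableAt) (fun z => (hf z).deriv) x y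

lemma Function.Periodic.periodic_of_hasDerivAt (hf : f.Periodic T)
    (hd : ∀ x, HasDerivAt f (f' x) x) : f'.Periodic T := by
  intro x
  have hshift := (hd (x + T)).comp_add_const x T
  rw [show (fun y => f (y + T)) = f from funext hf] at hshift
  exact hshift.unique (hd x)

end

namespace Function.Periodic

variable {f f' : ℝ → ℝ} {T : ℝ}

lemma eq_zero_of_hasDerivAt_const {c : ℝ} (hf : Periodic f T) (hT : T ≠ 0)
    (hd : ∀ x, HasDerivAt f c x) : c = 0 := by
  have hg : ∀ x, HasDerivAt (fun x => f x - c * x) 0 x := fun x => by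
    simpa using (hd x).fun_sub ((hasDerivAt_id x).const_mul c)
  have key := eq_of_forall_hasDerivAt_zero hg T 0
  rw [← zero_add T, hf 0] at key
  simpa [hT] using key

lemma eq_zero_of_hasDerivAt_mul {r : ℝ} (hf : Periodic f T) (hT : T ≠ 0) (hr : r ≠ 0)
    (hd : ∀ x, HasDerivAt f (r * f x) x) (x : ℝ) : f x = 0 := by
  have hg : ∀ x, HasDerivAt (fun x => f x * exp (-(r * x))) 0 x := fun x => by
    refine ((hd x).mul (((hasDerivAt_id x).const_mul r).neg.exp)).congr_deriv ?_
    simp only [mul_one]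
    ring
  have key := eq_of_forall_hasDerivAt_zero hg (x + T) x
  rw [hf x] at key
  have hexp : exp (-(r * (x + T))) ≠ exp (-(r * x)) := by
    rw [Ne, exp_eq_exp]
    intro hx
    exact mul_ne_zero hr hT (by linarith)
  by_contra hne
  exact hexp (mul_left_cancel₀ hne key)

/-- For `c > 0`, `f' ± √c (f + a/c)` satisfy first-order equations with growing or decaying
exponential solutions, so periodicity kills both. -/
lemma eq_of_hasDerivAt_add_mul_of_nonneg {a c : ℝ} (hf : Periodic f T)
    (hT : T ≠ 0) (hc : 0 ≤ c) (hd : ∀ x, HasDerivAt f (f' x) x)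
    (hd' : ∀ x, HasDerivAt f' (a + c * f x) x) (x : ℝ) : f x = f 0 := by
  have hf' := hf.periodic_of_hasDerivAt hd
  rcases hc.eq_or_lt with rfl | hcpos
  · have ha : a = 0 := hf'.eq_zero_of_hasDerivAt_const hT (by simpa using hd')
    have hf'c : ∀ x, f' x = f' 0 := fun x =>
      eq_of_forall_hasDerivAt_zero (by simpa [ha] using hd') x 0
    have h0 : f' 0 = 0 := hf.eq_zero_of_hasDerivAt_const hT (fun x => hf'c x ▸ hd x)
    exact eq_of_forall_hasDerivAt_zero (fun x => by simpa [hf'c x, h0] using hd x) x 0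
  · set r := √c
    have hr : 0 < r := sqrt_pos.mpr hcpos
    have hr2 : r ^ 2 = c := sq_sqrt hc
    have hplus : ∀ x, f' x + r * (f x + a / c) = 0 :=
      Periodic.eq_zero_of_hasDerivAt_mul (r := r) (fun x => by simp [hf' x, hf x]) hT hr.ne'
        fun x => ((hd' x).fun_add (((hd x).add_const (a / c)).const_mul r)).congr_deriv
          (by field_simp; linear_combination (-(c * f x + a)) * hr2)
    have hminus : ∀ x, f' x - r * (f x + a / c) = 0 :=
      Periodic.eq_zero_of_hasDerivAt_mul (r := -r) (fun x => by simp [hf' x, hf x]) hT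
        (neg_ne_zero.mpr hr.ne')
        fun x => ((hd' x).fun_sub (((hd x).add_const (a / c)).const_mul r)).congr_deriv
          (by field_simp; linear_combination (-(c * f x + a)) * hr2)
    have hconst : ∀ x, f x = -(a / c) := fun x => by
      have hvanish : r * (f x + a / c) = 0 := by linarith [hplus x, hminus x]
      linarith [(mul_eq_zero.mp hvanish).resolve_left hr.ne']
    rw [hconst x, hconst 0]

end Function.Periodic

lemma eq_zero_of_hasDerivAt_neg_sq_mul {g g' : ℝ → ℝ} {k : ℝ} (hk : k ≠ 0)
    (hd : ∀ x, HasDerivAt g (g' x) x) (hd' : ∀ x, HasDerivAt g' (-(k ^ 2 * g x)) x)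
    (h0 : g 0 = 0) (h0' : g' 0 = 0) (x : ℝ) : g x = 0 := by
  have henergy : ∀ x, HasDerivAt (fun x => g' x ^ 2 + k ^ 2 * g x ^ 2) 0 x := fun x =>
    (((hd' x).pow 2).fun_add (((hd x).pow 2).const_mul (k ^ 2))).congr_deriv (by ring)
  have hx := eq_of_forall_hasDerivAt_zero henergy x 0
  simp only [h0, h0'] at hx
  have hsq : k ^ 2 * g x ^ 2 = 0 := by nlinarith [sq_nonneg (g' x), sq_nonneg (k * g x)]
  simpa [hk] using hsq

/-- The phase is read off the polar form of `(u 0 - c) + i u'(0)/k`. -/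
lemma exists_eq_add_mul_cos_of_hasDerivAt {u u' : ℝ → ℝ} {k c : ℝ} (hk : k ≠ 0)
    (hd : ∀ x, HasDerivAt u (u' x) x) (hd' : ∀ x, HasDerivAt u' (-(k ^ 2 * (u x - c))) x) :
    ∃ A x₀, 0 ≤ A ∧ ∀ x, u x = c + A * cos (k * (x - x₀)) := by
  set z : ℂ := ⟨u 0 - c, u' 0 / k⟩
  refine ⟨‖z‖, z.arg / k, norm_nonneg z, fun x => ?_⟩
  have hre : ‖z‖ * cos z.arg = u 0 - c := Complex.norm_mul_cos_arg z
  have him : ‖z‖ * k * sin z.arg = u' 0 := by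
    rw [mul_right_comm, Complex.norm_mul_sin_arg]; exact div_mul_cancel₀ _ hk
  have hphase : k * (0 - z.arg / k) = -z.arg := by field_simp; ring
  have hlin : ∀ x, HasDerivAt (fun x => k * (x - z.arg / k)) k x := fun x => by
    simpa using ((hasDerivAt_id x).sub_const (z.arg / k)).const_mul k
  have hcos : ∀ x, HasDerivAt (fun x => c + ‖z‖ * cos (k * (x - z.arg / k)))
      (-(‖z‖ * k * sin (k * (x - z.arg / k)))) x := fun x =>
    (((hlin x).cos.const_mul ‖z‖).const_add c).congr_deriv (by ring)
  have hsin : ∀ x, HasDerivAt (fun x => -(‖z‖ * k * sin (k * (x - z.arg / k))))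
      (-(k ^ 2 * (‖z‖ * cos (k * (x - z.arg / k))))) x := fun x =>
    ((hlin x).sin.const_mul (‖z‖ * k)).neg.congr_deriv (by ring)
  have key := eq_zero_of_hasDerivAt_neg_sq_mul hk (fun x => (hd x).fun_sub (hcos x))
    (fun x => ((hd' x).fun_sub (hsin x)).congr_deriv (by ring))
    (by rw [hphase, cos_neg]; linear_combination -hre)
    (by rw [hphase, sin_neg]; linear_combination -him) x
  linarith

lemma exists_nat_eq_of_periodic_cos {c A k x₀ : ℝ} (hA : A ≠ 0) (hk : 0 < k)
    (hper : Function.Periodic (fun x => c + A * cos (k * (x - x₀))) (2 * π)) :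
    ∃ n : ℕ, 0 < n ∧ (n : ℝ) = k := by
  have hcos : cos (k * (2 * π)) = 1 := by simpa [hA] using hper x₀
  obtain ⟨j, hj⟩ := (cos_eq_one_iff _).mp hcos
  have hjk : (j : ℝ) = k := mul_right_cancel₀ (by positivity) hj
  have hj0 : 0 < j := by exact_mod_cast hjk ▸ hk
  exact ⟨j.toNat, by omega, by rw [← hjk]; exact_mod_cast Int.toNat_of_nonneg hj0.le⟩

lemma add_mul_cos_pos {a b : ℝ} (hb : |b| < a) (t : ℝ) : 0 < a + b * cos t := by
  have hlow := neg_abs_le (b * cos t)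
  rw [abs_mul] at hlow
  nlinarith [abs_cos_le_one t, abs_nonneg b]

/-- With `c = √(a² - b²)`, this agrees on `(-π, π)` with the Weierstrass-substitution primitive
`(2 / c) arctan (√((a - b) / (a + b)) tan (t / 2))`, but is smooth on all of `ℝ`. -/
lemma hasDerivAt_primitive_inv_add_mul_cos {a b : ℝ} (hb : |b| < a) (t : ℝ) :
    HasDerivAt (fun t => (t - 2 * arctan (b * sin t / (a + √(a ^ 2 - b ^ 2) + b * cos t)))
      / √(a ^ 2 - b ^ 2)) (a + b * cos t)⁻¹ t := by
  set c := √(a ^ 2 - b ^ 2)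
  have hc : 0 < c := sqrt_pos.mpr (by nlinarith [sq_abs b, abs_nonneg b])
  have hc2 : c ^ 2 = a ^ 2 - b ^ 2 := sq_sqrt (by nlinarith [sq_abs b, abs_nonneg b])
  have hpos := add_mul_cos_pos hb t
  have hden : 0 < a + c + b * cos t := by linarith
  have hquot := ((hasDerivAt_sin t).const_mul b).fun_div
    (((hasDerivAt_cos t).const_mul b).const_add (a + c)) hden.ne'
  refine (((hasDerivAt_id t).sub (hquot.arctan.const_mul 2)).div_const c).congr_deriv ?_
  have hsc := sin_sq_add_cos_sq t
  field_simp
  linear_combination (-(a + b * cos t + c)) * hc2 + (-b ^ 2 * (a + b * cos t + c)) * hsc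

lemma integral_inv_add_mul_cos {a b : ℝ} (hb : |b| < a) {n : ℕ} (hn : n ≠ 0) (x₀ : ℝ) :
    ∫ x in (0)..(2 * π), (a + b * cos (n * (x - x₀)))⁻¹ = 2 * π / √(a ^ 2 - b ^ 2) := by
  set F := fun t => (t - 2 * arctan (b * sin t / (a + √(a ^ 2 - b ^ 2) + b * cos t)))
      / √(a ^ 2 - b ^ 2)
  have hn' : (n : ℝ) ≠ 0 := Nat.cast_ne_zero.mpr hn
  have hG : ∀ x, HasDerivAt (fun x => F (n * (x - x₀)) / n) (a + b * cos (n * (x - x₀)))⁻¹ x :=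
    fun x => by
      have hlin : HasDerivAt (fun x : ℝ => n * (x - x₀)) n x := by
        simpa using ((hasDerivAt_id x).sub_const x₀).const_mul (n : ℝ)
      exact (((hasDerivAt_primitive_inv_add_mul_cos hb _).comp x hlin).div_const n).congr_deriv
        (by field_simp)
  have hcont : Continuous fun x => (a + b * cos (n * (x - x₀)))⁻¹ :=
    (by fun_prop : Continuous fun x => a + b * cos (n * (x - x₀))).inv₀
      fun x => (add_mul_cos_pos hb _).ne'
  rw [intervalIntegral.integral_eq_sub_of_hasDerivAt (fun x _ => hG x)
    (hcont.intervalIntegrable _ _)]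
  have hshift : (n : ℝ) * (2 * π - x₀) = n * (0 - x₀) + n * (2 * π) := by ring
  simp only [F, hshift, sin_add_nat_mul_two_pi, cos_add_nat_mul_two_pi]
  field_simp
  ring

lemma eq_neg_sq_and_sq_lt_of_sq_sub_sq_eq_one {m lam k a A : ℝ} (hk : 0 < k) (ha : 0 < a)
    (hA : 0 < A) (hmass : a ^ 2 - A ^ 2 = 1) (hlam : lam = k ^ 2 * a)
    (henergy : m + 2 * lam * (a + A) = k ^ 2 * (a + A) ^ 2) :
    m = -k ^ 2 ∧ k ^ 2 < lam ∧ √(lam ^ 2 - k ^ 4) = k ^ 2 * A := by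
  have hsq : lam ^ 2 - k ^ 4 = (k ^ 2 * A) ^ 2 := by
    rw [hlam]; linear_combination k ^ 4 * hmass
  refine ⟨by linear_combination henergy - (2 * (a + A)) * hlam - k ^ 2 * hmass, ?_,
    by rw [hsq, sqrt_sq (by positivity)]⟩
  have ha1 : 1 < a := by nlinarith
  rw [hlam]; nlinarith [pow_pos hk 2]

section ConstantMassAspect

variable {m lam : ℝ} {h h' : ℝ → ℝ}

lemma exists_first_integral (hh : ∀ x, HasDerivAt h (h' x) x)
    (hh' : ∀ x, HasDerivAt h' (m * exp (2 * h x) + lam * exp (h x)) x) :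
    ∃ C, ∀ x, h' x ^ 2 = m * exp (2 * h x) + 2 * lam * exp (h x) + C := by
  have henergy : ∀ x, HasDerivAt
      (fun x => h' x ^ 2 - m * exp (2 * h x) - 2 * lam * exp (h x)) 0 x := fun x =>
    ((((hh' x).pow 2).fun_sub (((hh x).const_mul 2).exp.const_mul m)).fun_sub
      ((hh x).exp.const_mul (2 * lam))).congr_deriv (by push_cast; ring)
  exact ⟨h' 0 ^ 2 - m * exp (2 * h 0) - 2 * lam * exp (h 0),
    fun x => by linarith [eq_of_forall_hasDerivAt_zero henergy x 0]⟩

lemma hasDerivAt_neg_mul_exp_neg {C : ℝ} (hh : ∀ x, HasDerivAt h (h' x) x)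
    (hh' : ∀ x, HasDerivAt h' (m * exp (2 * h x) + lam * exp (h x)) x)
    (hC : ∀ x, h' x ^ 2 = m * exp (2 * h x) + 2 * lam * exp (h x) + C) (x : ℝ) :
    HasDerivAt (fun x => -h' x * exp (-h x)) (lam + C * exp (-h x)) x := by
  have hinv : exp (h x) * exp (-h x) = 1 := by rw [← exp_add, add_neg_cancel, exp_zero]
  refine ((hh' x).fun_neg.fun_mul (hh x).fun_neg.exp).congr_deriv ?_
  linear_combination exp (-h x) * hC x + lam * hinv

lemma eq_zero_and_eq_neg_of_forall_eq (hh : ∀ x, HasDerivAt h (h' x) x)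
    (hh' : ∀ x, HasDerivAt h' (m * exp (2 * h x) + lam * exp (h x)) x)
    (hnorm : ∫ x in (0)..(2 * π), exp (h x) = 2 * π) (hconst : ∀ x, h x = h 0) :
    (∀ x, h x = 0) ∧ lam = -m := by
  have h0 : h 0 = 0 := by
    simp only [hconst, intervalIntegral.integral_const, smul_eq_mul, sub_zero] at hnorm
    simpa using mul_left_cancel₀ two_pi_pos.ne' (hnorm.trans (mul_one _).symm)
  have hzero : h = 0 := funext fun x => (hconst x).trans h0
  have hd : h' = 0 := funext fun x => (hh x).unique (by rw [hzero]; exact hasDerivAt_const x 0)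
  have hsum := (hh' 0).unique (by rw [hd]; exact hasDerivAt_const 0 0)
  rw [h0, mul_zero, exp_zero, mul_one, mul_one] at hsum
  exact ⟨congrFun hzero, by linarith⟩

lemma exists_nat_of_exp_neg_eq_add_mul_cos {k A x₀ : ℝ} (hh : ∀ x, HasDerivAt h (h' x) x)
    (hper : h.Periodic (2 * π)) (hnorm : ∫ x in (0)..(2 * π), exp (h x) = 2 * π)
    (hC : ∀ x, h' x ^ 2 = m * exp (2 * h x) + 2 * lam * exp (h x) + -k ^ 2)
    (hk : 0 < k) (hA : 0 < A) (hw : ∀ x, exp (-h x) = lam / k ^ 2 + A * cos (k * (x - x₀))) :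
    ∃ (n : ℕ) (x₀ : ℝ), 0 < n ∧ m = -(n : ℝ) ^ 2 ∧ (n : ℝ) ^ 2 < lam ∧
      ∀ x, exp (h x) = (n : ℝ) ^ 2 / (lam + √(lam ^ 2 - (n : ℝ) ^ 4) * cos (n * (x - x₀))) := by
  obtain ⟨n, hn, rfl⟩ := exists_nat_eq_of_periodic_cos (c := lam / k ^ 2) (x₀ := x₀) hA.ne' hk
    fun x => by simp only [← hw, hper x]
  set a := lam / (n : ℝ) ^ 2
  have hlam : lam = n ^ 2 * a := by simp only [a]; field_simp
  clear_value a
  have haA : A < a := by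
    have hπ := hw (x₀ + π / n)
    rw [show (n : ℝ) * (x₀ + π / n - x₀) = π by field_simp; ring, cos_pi] at hπ
    linarith [exp_pos (-h (x₀ + π / n))]
  have hexp : ∀ x, exp (h x) = (a + A * cos (n * (x - x₀)))⁻¹ := fun x => by
    rw [← hw, exp_neg, inv_inv]
  have hmass : a ^ 2 - A ^ 2 = 1 := by
    have hpos : 0 < a ^ 2 - A ^ 2 := by nlinarith
    rw [intervalIntegral.integral_congr fun x _ => hexp x,
      integral_inv_add_mul_cos (by rwa [abs_of_pos hA]) hn.ne' x₀,
      div_eq_iff (sqrt_pos.mpr hpos).ne', eq_comm, mul_eq_left₀ two_pi_pos.ne',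
      sqrt_eq_one] at hnorm
    exact hnorm
  have hcrit : h' x₀ = 0 := by
    refine IsLocalMin.hasDerivAt_eq_zero (Filter.Eventually.of_forall fun x => ?_) (hh x₀)
    have hmax : exp (-h x) ≤ exp (-h x₀) := by
      rw [hw, hw, sub_self, mul_zero, cos_zero, mul_one]
      nlinarith [cos_le_one (n * (x - x₀))]
    simpa using hmax
  have henergy : m + 2 * lam * (a + A) = n ^ 2 * (a + A) ^ 2 := by
    have h0 := hC x₀
    rw [hcrit, show 2 * h x₀ = h x₀ + h x₀ by ring, exp_add, hexp x₀] at h0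
    simp only [sub_self, mul_zero, cos_zero, mul_one] at h0
    have hX : a + A ≠ 0 := by linarith
    field_simp at h0
    linear_combination -h0
  obtain ⟨hm, hlt, hsqrt⟩ := eq_neg_sq_and_sq_lt_of_sq_sub_sq_eq_one (Nat.cast_pos.mpr hn)
    (by linarith) hA hmass hlam henergy
  exact ⟨n, x₀, hn, hm, hlt, fun x => by rw [hexp x, hsqrt, hlam]; field_simp⟩

end ConstantMassAspect

/-- Classification of constrained critical points with constant mass aspect:
any `2π`-periodic `C²` solution of `h'' = m e^{2h} + λ e^{h}` with
`∫₀^{2π} e^{h} = 2π` is either identically zero (and then `λ = −m`), or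
`m = −n²` for a positive integer `n`, `λ > n²`, and
`e^{h(x)} = n²/(λ + √(λ²−n⁴) cos(n(x−x₀)))` for some `x₀`. -/
theorem critical_points_constant_mass_aspect (m lam : ℝ) (h : ℝ → ℝ)
    (hreg : ContDiff ℝ 2 h) (hper : Function.Periodic h (2 * π))
    (hnorm : (∫ x in (0:ℝ)..(2 * π), Real.exp (h x)) = 2 * π)
    (heq : ∀ x, deriv (deriv h) x = m * Real.exp (2 * h x) + lam * Real.exp (h x)) :
    ((∀ x, h x = 0) ∧ lam = -m) ∨
      ∃ (n : ℕ) (x₀ : ℝ), 0 < n ∧ m = -(n : ℝ) ^ 2 ∧ (n : ℝ) ^ 2 < lam ∧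
        ∀ x, Real.exp (h x) =
          (n : ℝ) ^ 2 /
            (lam + Real.sqrt (lam ^ 2 - (n : ℝ) ^ 4) * Real.cos (n * (x - x₀))) := by
  have hdiff : Differentiable ℝ h ∧ Differentiable ℝ (deriv h) :=
    ⟨hreg.differentiable two_ne_zero, (hreg.iterate_deriv' 1 1).differentiable one_ne_zero⟩
  have hh : ∀ x, HasDerivAt h (deriv h x) x := fun x => (hdiff.1 x).hasDerivAt
  have hh' : ∀ x, HasDerivAt (deriv h) (m * exp (2 * h x) + lam * exp (h x)) x := fun x =>
    heq x ▸ (hdiff.2 x).hasDerivAt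
  obtain ⟨C, hC⟩ := exists_first_integral hh hh'
  have hw : ∀ x, HasDerivAt (fun x => exp (-h x)) (-deriv h x * exp (-h x)) x := fun x =>
    (hh x).fun_neg.exp.congr_deriv (mul_comm _ _)
  have hw' := hasDerivAt_neg_mul_exp_neg hh hh' hC
  have hconst (hc : ∀ x, exp (-h x) = exp (-h 0)) : (∀ x, h x = 0) ∧ lam = -m :=
    eq_zero_and_eq_neg_of_forall_eq hh hh' hnorm fun x => by simpa using hc x
  rcases le_or_gt 0 C with hC0 | hC0
  · have hwper : Function.Periodic (fun x => exp (-h x)) (2 * π) := fun x => by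
      simp only [hper x]
    exact Or.inl (hconst (hwper.eq_of_hasDerivAt_add_mul_of_nonneg two_pi_pos.ne' hC0 hw hw'))
  obtain ⟨k, hk, rfl⟩ : ∃ k, 0 < k ∧ C = -k ^ 2 :=
    ⟨√(-C), sqrt_pos.mpr (neg_pos.mpr hC0), by rw [sq_sqrt (neg_pos.mpr hC0).le, neg_neg]⟩
  obtain ⟨A, x₀, hA, hform⟩ := exists_eq_add_mul_cos_of_hasDerivAt (c := lam / k ^ 2) hk.ne' hw
    fun x => (hw' x).congr_deriv (by field_simp; ring)
  rcases hA.eq_or_lt with rfl | hA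
  · exact Or.inl (hconst fun x => by simp [hform])
  · exact Or.inr (exists_nat_of_exp_neg_eq_add_mul_cos hh hper hnorm hC hk hA hform)
end

section
/- Let μ : ℝ → ℝ be smooth and 2π-periodic, let (ψ₁, ψ₂) be a Wronskian-normalized pair of solutions of the Hill equation ψ'' = (μ/4)·ψ with monodromy matrix M, and let f be a circle-diffeomorphism lift. Define f*ψᵢ(x) := f'(x)^{−1/2}·ψᵢ(f(x)) and μ_f(x) := f'(x)²·μ(f(x)) − 2·S(f)(x). Then μ_f is smooth and 2π-periodic, (f*ψ₁, f*ψ₂) is a Wronskian-normalized pair of solutions of the Hill equation with μ replaced by μ_f, and its monodromy matrix equals M. In particular the monodromy matrix is invariant under orientation-preserving diffeomorphisms of the circle. -/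
open Real Matrix

/-- The Schwarzian derivative `S(f) = f'''/f' − (3/2)(f''/f')²`. -/
noncomputable def schwarzian (f : ℝ → ℝ) (x : ℝ) : ℝ :=
  deriv (deriv (deriv f)) x / deriv f x -
    (3 / 2) * (deriv (deriv f) x / deriv f x) ^ 2


section AuxHill

lemma deriv_periodic_aux (g : ℝ → ℝ) (c : ℝ) (h : ∀ x, g (x + c) = g x) (x : ℝ) :
    deriv g (x + c) = deriv g x := by
  rw [← deriv_comp_add_const g c x]
  congr 1
  funext y
  exact h y

lemma circle_deriv_periodic (f : ℝ → ℝ) (hfp : ∀ x, f (x + 2 * π) = f x + 2 * π) (x : ℝ) :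
    deriv f (x + 2 * π) = deriv f x := by
  rw [← deriv_comp_add_const f (2 * π) x]
  have : (fun y => f (y + 2 * π)) = fun y => f y + 2 * π := funext hfp
  rw [this, deriv_add_const]

lemma hill_hasDerivAt (ψ f : ℝ → ℝ) (hψ : ContDiff ℝ 2 ψ) (hf : ContDiff ℝ (⊤ : ℕ∞) f)
    (hg : ∀ x, 0 < deriv f x) (x : ℝ) :
    HasDerivAt (fun y => ψ (f y) / Real.sqrt (deriv f y))
      (deriv ψ (f x) * Real.sqrt (deriv f x)
        - ψ (f x) * deriv (deriv f) x / (2 * Real.sqrt (deriv f x) * deriv f x)) x := by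
  have hfd : Differentiable ℝ f := hf.differentiable (by simp)
  have hψd : Differentiable ℝ ψ := hψ.differentiable two_ne_zero
  have hg' : ContDiff ℝ (⊤ : ℕ∞) (deriv f) := (contDiff_succ_iff_deriv.mp (by simpa using hf)).2.2
  have hgd : Differentiable ℝ (deriv f) := hg'.differentiable (by simp)
  have h1 : HasDerivAt f (deriv f x) x := (hfd x).hasDerivAt
  have h3 : HasDerivAt (fun y => ψ (f y)) (deriv ψ (f x) * deriv f x) x :=
    ((hψd (f x)).hasDerivAt).comp x h1
  have h4 : HasDerivAt (deriv f) (deriv (deriv f) x) x := (hgd x).hasDerivAt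
  have h5 : HasDerivAt (fun y => Real.sqrt (deriv f y))
      (1 / (2 * Real.sqrt (deriv f x)) * deriv (deriv f) x) x :=
    (Real.hasDerivAt_sqrt (hg x).ne').comp x h4
  have hs0 : Real.sqrt (deriv f x) ≠ 0 := (Real.sqrt_pos.mpr (hg x)).ne'
  have h6 : HasDerivAt (fun y => ψ (f y) / Real.sqrt (deriv f y)) _ x := h3.div h5 hs0
  rw [Real.sq_sqrt (hg x).le] at h6
  convert h6 using 1
  have hg0 : deriv f x ≠ 0 := (hg x).ne'
  field_simp

lemma hill_second (μ ψ f : ℝ → ℝ) (hψ : ContDiff ℝ 2 ψ)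
    (hH : ∀ x, deriv (deriv ψ) x = μ x / 4 * ψ x)
    (hf : ContDiff ℝ (⊤ : ℕ∞) f) (hg : ∀ x, 0 < deriv f x) (x : ℝ) :
    deriv (deriv (fun y => ψ (f y) / Real.sqrt (deriv f y))) x =
      ((deriv f x) ^ 2 * μ (f x) - 2 * schwarzian f x) / 4 *
        (ψ (f x) / Real.sqrt (deriv f x)) := by
  have hfd : Differentiable ℝ f := hf.differentiable (by simp)
  have hψd : Differentiable ℝ ψ := hψ.differentiable two_ne_zero
  have hψ1 : ContDiff ℝ 1 (deriv ψ) := by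
    have h2' : ContDiff ℝ (1 + 1) ψ := by
      rw [show ((1 : WithTop ℕ∞) + 1) = 2 by norm_num]; exact hψ
    exact (contDiff_succ_iff_deriv.mp h2').2.2
  have hψ'd : Differentiable ℝ (deriv ψ) := hψ1.differentiable one_ne_zero
  have hg' : ContDiff ℝ (⊤ : ℕ∞) (deriv f) := (contDiff_succ_iff_deriv.mp (by simpa using hf)).2.2
  have hgd : Differentiable ℝ (deriv f) := hg'.differentiable (by simp)
  have hg1' : ContDiff ℝ (⊤ : ℕ∞) (deriv (deriv f)) :=
    (contDiff_succ_iff_deriv.mp (by simpa using hg')).2.2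
  have hg1d : Differentiable ℝ (deriv (deriv f)) := hg1'.differentiable (by simp)
  have hD1 : deriv (fun y => ψ (f y) / Real.sqrt (deriv f y)) =
      fun y => deriv ψ (f y) * Real.sqrt (deriv f y)
        - ψ (f y) * deriv (deriv f) y / (2 * Real.sqrt (deriv f y) * deriv f y) :=
    funext fun y => (hill_hasDerivAt ψ f hψ hf hg y).deriv
  rw [hD1]
  have h1 : HasDerivAt f (deriv f x) x := (hfd x).hasDerivAt
  have h3 : HasDerivAt (fun y => ψ (f y)) (deriv ψ (f x) * deriv f x) x :=
    ((hψd (f x)).hasDerivAt).comp x h1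
  have h4 : HasDerivAt (deriv f) (deriv (deriv f) x) x := (hgd x).hasDerivAt
  have h5 : HasDerivAt (fun y => Real.sqrt (deriv f y))
      (1 / (2 * Real.sqrt (deriv f x)) * deriv (deriv f) x) x :=
    (Real.hasDerivAt_sqrt (hg x).ne').comp x h4
  have hs0 : Real.sqrt (deriv f x) ≠ 0 := (Real.sqrt_pos.mpr (hg x)).ne'
  have hg0 : deriv f x ≠ 0 := (hg x).ne'
  have hA : HasDerivAt (fun y => deriv ψ (f y)) (deriv (deriv ψ) (f x) * deriv f x) x :=
    ((hψ'd (f x)).hasDerivAt).comp x h1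
  have hB := hA.mul h5
  have hg1at : HasDerivAt (deriv (deriv f)) (deriv (deriv (deriv f)) x) x := (hg1d x).hasDerivAt
  have hC : HasDerivAt (fun y => ψ (f y) * deriv (deriv f) y)
      (deriv ψ (f x) * deriv f x * deriv (deriv f) x + ψ (f x) * deriv (deriv (deriv f)) x) x :=
    h3.mul hg1at
  have hden : HasDerivAt (fun y => 2 * Real.sqrt (deriv f y) * deriv f y)
      (2 * (1 / (2 * Real.sqrt (deriv f x)) * deriv (deriv f) x) * deriv f x
        + 2 * Real.sqrt (deriv f x) * deriv (deriv f) x) x :=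
    (h5.const_mul 2).mul h4
  have hden0 : 2 * Real.sqrt (deriv f x) * deriv f x ≠ 0 := by positivity
  have hE : HasDerivAt (fun y => deriv ψ (f y) * Real.sqrt (deriv f y)
      - ψ (f y) * deriv (deriv f) y / (2 * Real.sqrt (deriv f y) * deriv f y)) _ x :=
    hB.sub (hC.div hden hden0)
  rw [hE.deriv]
  simp only [schwarzian]
  rw [hH (f x)]
  have hsq : Real.sqrt (deriv f x) ^ 2 = deriv f x := Real.sq_sqrt (hg x).le
  set s := Real.sqrt (deriv f x) with hs
  rw [← hsq]
  have hs0' : s ≠ 0 := hs0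
  field_simp
  ring

end AuxHill

/-- Invariance of the monodromy matrix under asymptotic symmetries: if
`(ψ₁, ψ₂)` is a Wronskian-normalized pair of solutions of the Hill equation
for `μ` with monodromy matrix `M` and `f` is a circle-diffeomorphism lift,
then `μ_f = f'²·(μ∘f) − 2 S(f)` is smooth and `2π`-periodic,
`(f*ψ₁, f*ψ₂)` with `f*ψᵢ = (f')^{−1/2}·(ψᵢ ∘ f)` is a Wronskian-normalized
pair of solutions of the Hill equation for `μ_f`, and its monodromy matrix is
again `M`. -/
theorem monodromy_invariant (μ : ℝ → ℝ) (hμ : ContDiff ℝ (⊤ : ℕ∞) μ)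
    (hper : Function.Periodic μ (2 * π)) (ψ₁ ψ₂ : ℝ → ℝ)
    (h₁ : ContDiff ℝ 2 ψ₁) (h₂ : ContDiff ℝ 2 ψ₂)
    (hH₁ : ∀ x, deriv (deriv ψ₁) x = μ x / 4 * ψ₁ x)
    (hH₂ : ∀ x, deriv (deriv ψ₂) x = μ x / 4 * ψ₂ x)
    (hW : ∀ x, deriv ψ₁ x * ψ₂ x - deriv ψ₂ x * ψ₁ x = 1)
    (M : Matrix (Fin 2) (Fin 2) ℝ)
    (hM : ∀ x, ψ₁ (x + 2 * π) = M 0 0 * ψ₁ x + M 0 1 * ψ₂ x ∧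
               ψ₂ (x + 2 * π) = M 1 0 * ψ₁ x + M 1 1 * ψ₂ x)
    (f : ℝ → ℝ) (hf : IsCircleDiffeoLift f)
    (μf : ℝ → ℝ)
    (hμf : ∀ x, μf x = (deriv f x) ^ 2 * μ (f x) - 2 * schwarzian f x)
    (φ₁ φ₂ : ℝ → ℝ)
    (hφ₁ : ∀ x, φ₁ x = ψ₁ (f x) / Real.sqrt (deriv f x))
    (hφ₂ : ∀ x, φ₂ x = ψ₂ (f x) / Real.sqrt (deriv f x)) :
    ContDiff ℝ (⊤ : ℕ∞) μf ∧ Function.Periodic μf (2 * π) ∧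
      (∀ x, deriv (deriv φ₁) x = μf x / 4 * φ₁ x) ∧
      (∀ x, deriv (deriv φ₂) x = μf x / 4 * φ₂ x) ∧
      (∀ x, deriv φ₁ x * φ₂ x - deriv φ₂ x * φ₁ x = 1) ∧
      ∀ x, φ₁ (x + 2 * π) = M 0 0 * φ₁ x + M 0 1 * φ₂ x ∧
           φ₂ (x + 2 * π) = M 1 0 * φ₁ x + M 1 1 * φ₂ x := by
  obtain ⟨hfs, hg, hfp⟩ := hf
  have hμfE : μf = fun x => (deriv f x) ^ 2 * μ (f x) - 2 * schwarzian f x := funext hμf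
  have hφ₁E : φ₁ = fun x => ψ₁ (f x) / Real.sqrt (deriv f x) := funext hφ₁
  have hφ₂E : φ₂ = fun x => ψ₂ (f x) / Real.sqrt (deriv f x) := funext hφ₂
  subst hμfE hφ₁E hφ₂E
  have hg' : ContDiff ℝ (⊤ : ℕ∞) (deriv f) := (contDiff_succ_iff_deriv.mp (by simpa using hfs)).2.2
  have hg1' : ContDiff ℝ (⊤ : ℕ∞) (deriv (deriv f)) :=
    (contDiff_succ_iff_deriv.mp (by simpa using hg')).2.2
  have hg2' : ContDiff ℝ (⊤ : ℕ∞) (deriv (deriv (deriv f))) :=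
    (contDiff_succ_iff_deriv.mp (by simpa using hg1')).2.2
  have hgne : ∀ x, deriv f x ≠ 0 := fun x => (hg x).ne'
  have hgp : ∀ x, deriv f (x + 2 * π) = deriv f x := circle_deriv_periodic f hfp
  have hg1p : ∀ x, deriv (deriv f) (x + 2 * π) = deriv (deriv f) x :=
    deriv_periodic_aux (deriv f) (2 * π) hgp
  have hg2p : ∀ x, deriv (deriv (deriv f)) (x + 2 * π) = deriv (deriv (deriv f)) x :=
    deriv_periodic_aux (deriv (deriv f)) (2 * π) hg1p
  have hsp : ∀ x, Real.sqrt (deriv f (x + 2 * π)) = Real.sqrt (deriv f x) := by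
    intro x; rw [hgp x]
  refine ⟨?_, ?_, ?_, ?_, ?_, ?_⟩
  · have hschw : ContDiff ℝ (⊤ : ℕ∞) (fun x => schwarzian f x) := by
      simp only [schwarzian]
      exact (hg2'.div hg' hgne).sub
        (contDiff_const.mul ((hg1'.div hg' hgne).pow 2))
    exact ((hg'.pow 2).mul (hμ.comp hfs)).sub (contDiff_const.mul hschw)
  · intro x
    simp only [schwarzian]
    rw [hfp x, hgp x, hg1p x, hg2p x, hper (f x)]
  · intro x
    simpa using hill_second μ ψ₁ f h₁ hH₁ hfs hg x
  · intro x
    simpa using hill_second μ ψ₂ f h₂ hH₂ hfs hg x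
  · intro x
    rw [(hill_hasDerivAt ψ₁ f h₁ hfs hg x).deriv, (hill_hasDerivAt ψ₂ f h₂ hfs hg x).deriv]
    have hs0 : Real.sqrt (deriv f x) ≠ 0 := (Real.sqrt_pos.mpr (hg x)).ne'
    have hg0 : deriv f x ≠ 0 := (hg x).ne'
    have heq : (deriv ψ₁ (f x) * Real.sqrt (deriv f x)
          - ψ₁ (f x) * deriv (deriv f) x / (2 * Real.sqrt (deriv f x) * deriv f x))
            * (ψ₂ (f x) / Real.sqrt (deriv f x))
        - (deriv ψ₂ (f x) * Real.sqrt (deriv f x)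
          - ψ₂ (f x) * deriv (deriv f) x / (2 * Real.sqrt (deriv f x) * deriv f x))
            * (ψ₁ (f x) / Real.sqrt (deriv f x))
        = deriv ψ₁ (f x) * ψ₂ (f x) - deriv ψ₂ (f x) * ψ₁ (f x) := by
      field_simp
      ring
    simpa [heq] using hW (f x)
  · intro x
    constructor
    · simp only
      rw [hfp x, hsp x, (hM (f x)).1]
      ring
    · simp only
      rw [hfp x, hsp x, (hM (f x)).2]
      ring
end
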